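/- arXiv:2602.10665 — 8 statements merged into one kernel-verified Lean document; each statement's English description precedes it below -/
import Mathlib

section
/- Let n, m ∈ ℕ with 1 ≤ n ≤ m, let Γ ∈ ℝ^{n×m}, and let ρ ≥ 1. Suppose there exists an invertible linear map T : ℝⁿ → ℝⁿ such that T(Γ(B₁^m)) ⊆ B₁ⁿ ⊆ ρ·T(Γ(B₁^m)). Then there exists a matrix A ∈ ℝ^{m×n} such that every column a of A satisfies ‖a‖₁ ≤ 1 and |supp(a)| ≤ n, and Γ(B₁^m) ⊆ ρ·(ΓA)(B₁ⁿ). -/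
open MeasureTheory Matrix
open scoped ENNReal NNReal Pointwise

noncomputable section

/-- The cross-polytope (closed unit ball of `ℓ₁`) in `ℝ^k`. -/
def B1 (k : ℕ) : Set (Fin k → ℝ) := {x | ∑ i, |x i| ≤ 1}

/-!
The vectors `ρ⁻¹ T⁻¹ eᵢ` lie in `Γ(B₁^m)`. Taking as columns of `A` preimages `aᵢ ∈ B₁^m` of them
gives `ΓA = ρ⁻¹ T⁻¹`, so `Γ(B₁^m) ⊆ ρ (ΓA)(B₁ⁿ)` follows from `T(Γ(B₁^m)) ⊆ B₁ⁿ`. The preimages can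
be chosen `n`-sparse by an `ℓ₁` form of Carathéodory's theorem: if `x` has more than `n` nonzero
coordinates, the corresponding columns of `Γ` are dependent, and moving `x` along a kernel vector
supported in `supp x` kills a coordinate without increasing `‖x‖₁` or changing `Γx`.
-/

open Function Module

theorem abs_add_mul_le_abs_add_mul_sign_mul {x μ t : ℝ} (ht : 0 ≤ t) (hx : x = 0 → μ = 0)
    (hcross : x * μ < 0 → t ≤ -x / μ) :
    |x + t * μ| ≤ |x| + t * (Real.sign x * μ) := by
  rcases lt_trichotomy x 0 with hneg | rfl | hpos
  · have : x + t * μ ≤ 0 := by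
      rcases le_or_gt μ 0 with hμ | hμ
      · nlinarith
      · have := hcross (mul_neg_of_neg_of_pos hneg hμ)
        rw [le_div_iff₀ hμ] at this
        linarith
    rw [abs_of_nonpos this, abs_of_neg hneg, Real.sign_of_neg hneg]
    linarith
  · simp [hx rfl]
  · have : 0 ≤ x + t * μ := by
      rcases le_or_gt 0 μ with hμ | hμ
      · nlinarith
      · have := hcross (mul_neg_of_pos_of_neg hpos hμ)
        rw [le_div_iff_of_neg hμ] at this
        linarith
    rw [abs_of_nonneg this, abs_of_pos hpos, Real.sign_of_pos hpos]
    linarith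

theorem Real.sign_mul_nonneg_of_mul_nonneg {x μ : ℝ} (h : 0 ≤ x * μ) : 0 ≤ Real.sign x * μ := by
  rcases lt_trichotomy x 0 with hx | rfl | hx
  · rw [Real.sign_of_neg hx]
    nlinarith
  · simp
  · rw [Real.sign_of_pos hx]
    nlinarith

theorem neg_div_pos_of_mul_neg {α : Type*} [Field α] [LinearOrder α] [IsStrictOrderedRing α]
    {x μ : α} (h : x * μ < 0) : 0 < -x / μ := by
  rw [neg_div, neg_pos]
  exact div_neg_iff.2 (mul_neg_iff.1 h)

theorem exists_ne_zero_map_eq_zero_support_subset {K E ι : Type*} [Field K] [AddCommGroup E]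
    [Module K E] [FiniteDimensional K E] [Finite ι] (f : (ι → K) →ₗ[K] E) {s : Set ι}
    (hs : finrank K E < s.ncard) : ∃ μ, μ ≠ 0 ∧ f μ = 0 ∧ support μ ⊆ s := by
  have hdim : finrank K E < finrank K (s → K) := by
    have := Fintype.ofFinite s
    rwa [Module.finrank_fintype_fun_eq_card, Fintype.card_eq_nat_card, Nat.card_coe_set_eq]
  obtain ⟨v, hv, hv0⟩ := (Submodule.ne_bot_iff _).1 <| LinearMap.ker_ne_bot_of_finrank_lt
    (f := f ∘ₗ ExtendByZero.linearMap K ((↑) : s → ι)) hdim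
  refine ⟨extend ((↑) : s → ι) v 0, fun h => hv0 (funext fun i => ?_), hv, fun j hj => ?_⟩
  · simpa [Subtype.val_injective.extend_apply] using congrFun h i
  · by_contra hjs
    exact hj (extend_apply' _ _ _ fun ⟨i, hi⟩ => hjs (hi ▸ i.2))

section Sparsify

variable {ι : Type*} [Fintype ι]

/-- On `[0, t]`, where `t` is the first time a coordinate of `x + t • μ` reaches zero, no
coordinate changes sign, so `‖x + t • μ‖₁` is affine in `t` with slope `∑ sign (x j) * μ j`;
replacing `μ` by `-μ` makes that slope nonpositive. -/
theorem exists_abs_sum_add_smul_le_of_support_subset {x μ : ι → ℝ} (hμ : μ ≠ 0)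
    (hsupp : support μ ⊆ support x) :
    ∃ t : ℝ, ∑ j, |(x + t • μ) j| ≤ ∑ j, |x j| ∧ ∃ j, x j ≠ 0 ∧ (x + t • μ) j = 0 := by
  wlog hslope : ∑ j, Real.sign (x j) * μ j ≤ 0 generalizing μ
  · obtain ⟨t, hle, j, hxj, hj⟩ := this (μ := -μ) (neg_ne_zero.2 hμ) (by simpa using hsupp)
      (by simp only [Pi.neg_apply, mul_neg, Finset.sum_neg_distrib]; linarith)
    exact ⟨-t, by simpa using hle, j, hxj, by simpa using hj⟩
  have hx : ∀ j, x j = 0 → μ j = 0 := fun j => by simpa using mt (@hsupp j)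
  set J := Finset.univ.filter fun j => x j * μ j < 0
  have hJ : J.Nonempty := by
    by_contra hJ
    rw [Finset.not_nonempty_iff_eq_empty, Finset.filter_eq_empty_iff] at hJ
    have hnn : ∀ j ∈ Finset.univ, 0 ≤ Real.sign (x j) * μ j :=
      fun j hj => Real.sign_mul_nonneg_of_mul_nonneg (not_lt.1 (hJ hj))
    have hzero := (Finset.sum_eq_zero_iff_of_nonneg hnn).1 (hslope.antisymm (Finset.sum_nonneg hnn))
    refine hμ (funext fun j => ?_)
    by_cases hxj : x j = 0
    · exact hx j hxj
    · exact (mul_eq_zero.1 (hzero j (Finset.mem_univ j))).resolve_left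
        (mt Real.sign_eq_zero_iff.1 hxj)
  obtain ⟨j₀, hj₀J, hmin⟩ := J.exists_min_image (fun j => -x j / μ j) hJ
  have hj₀ : x j₀ * μ j₀ < 0 := (Finset.mem_filter.1 hj₀J).2
  have hμj₀ : μ j₀ ≠ 0 := by rintro h; simp [h] at hj₀
  have ht := neg_div_pos_of_mul_neg hj₀
  refine ⟨-x j₀ / μ j₀, ?_, j₀, fun h => by simp [h] at hj₀, by simp; field_simp; ring⟩
  calc ∑ j, |x j + -x j₀ / μ j₀ * μ j|
      ≤ ∑ j, (|x j| + -x j₀ / μ j₀ * (Real.sign (x j) * μ j)) :=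
        Finset.sum_le_sum fun j _ => abs_add_mul_le_abs_add_mul_sign_mul ht.le (hx j)
          fun h => hmin j (Finset.mem_filter.2 ⟨Finset.mem_univ j, h⟩)
    _ = ∑ j, |x j| + -x j₀ / μ j₀ * ∑ j, Real.sign (x j) * μ j := by
        rw [Finset.sum_add_distrib, Finset.mul_sum]
    _ ≤ ∑ j, |x j| := by nlinarith

theorem exists_map_eq_abs_sum_le_ncard_support_le {E : Type*} [AddCommGroup E] [Module ℝ E]
    [FiniteDimensional ℝ E] (f : (ι → ℝ) →ₗ[ℝ] E) (x : ι → ℝ) :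
    ∃ a, f a = f x ∧ ∑ j, |a j| ≤ ∑ j, |x j| ∧ (support a).ncard ≤ finrank ℝ E := by
  induction hk : (support x).ncard using Nat.strong_induction_on generalizing x with
  | _ k ih =>
  by_cases hsmall : k ≤ finrank ℝ E
  · exact ⟨x, rfl, le_rfl, hk ▸ hsmall⟩
  obtain ⟨μ, hμ, hfμ, hsupp⟩ :=
    exists_ne_zero_map_eq_zero_support_subset f (s := support x) (by omega)
  obtain ⟨t, hle, j, hxj, hj⟩ := exists_abs_sum_add_smul_le_of_support_subset hμ hsupp
  have hshrink : support (x + t • μ) ⊂ support x :=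
    ⟨(support_add _ _).trans (Set.union_subset subset_rfl
      ((support_smul_subset_right _ _).trans hsupp)), fun hsub => hsub hxj hj⟩
  obtain ⟨a, hfa, hla, hsa⟩ := ih _ (hk ▸ Set.ncard_lt_ncard hshrink) (x + t • μ) rfl
  exact ⟨a, by simp [hfa, hfμ], hla.trans hle, hsa⟩

end Sparsify

theorem single_mem_B1 {k : ℕ} (i : Fin k) : Pi.single i 1 ∈ B1 k := by
  simp [B1, Pi.single_apply, apply_ite]

theorem sparse_coefficient_representation_general (n m : ℕ)
    (Γ : Matrix (Fin n) (Fin m) ℝ) (ρ : ℝ) (hρ : 1 ≤ ρ)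
    (hT : ∃ T : (Fin n → ℝ) ≃ₗ[ℝ] (Fin n → ℝ),
      T '' (Γ.mulVec '' B1 m) ⊆ B1 n ∧ B1 n ⊆ ρ • (T '' (Γ.mulVec '' B1 m))) :
    ∃ A : Matrix (Fin m) (Fin n) ℝ,
      (∀ i, (∑ j, |A j i|) ≤ 1 ∧ {j | A j i ≠ 0}.ncard ≤ n) ∧
      Γ.mulVec '' B1 m ⊆ ρ • ((Γ * A).mulVec '' B1 n) := by
  obtain ⟨T, hTin, hTout⟩ := hT
  have hρ0 : ρ ≠ 0 := (zero_lt_one.trans_le hρ).ne'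
  have hcol : ∀ i, ∃ a : Fin m → ℝ, Γ *ᵥ a = ρ⁻¹ • T.symm (Pi.single i 1) ∧
      ∑ j, |a j| ≤ 1 ∧ (support a).ncard ≤ n := by
    intro i
    obtain ⟨x, hx, hΓx⟩ : ρ⁻¹ • T.symm (Pi.single i 1) ∈ Γ.mulVec '' B1 m := by
      have := (Set.mem_smul_set_iff_inv_smul_mem₀ hρ0 _ _).1 (hTout (single_mem_B1 i))
      rwa [T.image_eq_preimage_symm, Set.mem_preimage, map_smul] at this
    obtain ⟨a, hΓa, hla, hsa⟩ := exists_map_eq_abs_sum_le_ncard_support_le Γ.mulVecLin x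
    exact ⟨a, hΓa.trans hΓx, hla.trans hx, by simpa using hsa⟩
  choose a hΓa hla hsa using hcol
  have hΓA : Γ * of (fun j i => a i j) = ρ⁻¹ • LinearMap.toMatrix' T.symm := by
    ext k i
    simpa [Matrix.mul_apply, mulVec, dotProduct] using congrFun (hΓa i) k
  refine ⟨of fun j i => a i j, fun i => ⟨hla i, hsa i⟩, ?_⟩
  rintro _ ⟨x, hx, rfl⟩
  refine (Set.mem_smul_set_iff_inv_smul_mem₀ hρ0 _ _).2 ⟨T (Γ *ᵥ x), hTin ⟨_, ⟨x, hx, rfl⟩, rfl⟩, ?_⟩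
  simp [hΓA, smul_mulVec, LinearMap.toMatrix'_mulVec]

/-- on the Banach–Mazur event, `G_m = Γ(B₁^m)` admits a sparse coefficient
matrix `A` with `ℓ₁`-bounded, `n`-sparse columns such that `G_m ⊆ ρ·(ΓA)(B₁ⁿ)`. -/
theorem sparse_coefficient_representation (n m : ℕ) (hn : 1 ≤ n) (hnm : n ≤ m)
    (Γ : Matrix (Fin n) (Fin m) ℝ) (ρ : ℝ) (hρ : 1 ≤ ρ)
    (hT : ∃ T : (Fin n → ℝ) ≃ₗ[ℝ] (Fin n → ℝ),
      T '' (Γ.mulVec '' B1 m) ⊆ B1 n ∧ B1 n ⊆ ρ • (T '' (Γ.mulVec '' B1 m))) :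
    ∃ A : Matrix (Fin m) (Fin n) ℝ,
      (∀ i, (∑ j, |A j i|) ≤ 1 ∧ {j | A j i ≠ 0}.ncard ≤ n) ∧
      Γ.mulVec '' B1 m ⊆ ρ • ((Γ * A).mulVec '' B1 n) :=
  sparse_coefficient_representation_general n m Γ ρ hρ hT
end
end

section
/- Let n ≥ 2 and m be integers with n ≤ m, let ρ ≥ 1, and let ε ∈ (0,1] satisfy ε·ρ·n² ≤ 1. Let Γ ∈ ℝ^{n×m} and suppose there exists an invertible linear map T : ℝⁿ → ℝⁿ with T(Γ(B₁^m)) ⊆ B₁ⁿ ⊆ ρ·T(Γ(B₁^m)). Then there exists A ∈ A_{m,n}(ε) such that Γ(B₁^m) ⊆ 2ρ·(ΓA)(B₁ⁿ). -/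
open MeasureTheory Matrix
open scoped ENNReal NNReal Pointwise

noncomputable section

/-- The class of coefficient matrices: every column has `ℓ₁`-norm at most 1 and
support of size at most `n`. -/
def Amn (m n : ℕ) : Set (Matrix (Fin m) (Fin n) ℝ) :=
  {A | ∀ i, (∑ j, |A j i|) ≤ 1 ∧ {j | A j i ≠ 0}.ncard ≤ n}

/-- The discretized class: members of `Amn m n` whose entries all lie in `ε·ℤ`. -/
def AmnEps (m n : ℕ) (ε : ℝ) : Set (Matrix (Fin m) (Fin n) ℝ) :=
  {A | A ∈ Amn m n ∧ ∀ j i, ∃ z : ℤ, A j i = ε * z}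

/-! Let `L = T ∘ Γ`, a contraction for the `ℓ₁` norms. Each `ρ⁻¹ eⱼ` has an `ℓ₁`-preimage of norm
at most 1 under `L`, and by the conic Carathéodory theorem one supported on at most `n`
coordinates. Rounding its entries toward zero to `εℤ` keeps the norm and the support and moves
it by at most `εn` in `ℓ₁`; these rounded vectors are the columns of `A`. Then
`T Γ A = ρ⁻¹ I + Δ` with `‖Δ‖₁ ≤ εn ≤ (2ρ)⁻¹`, so `T Γ A` is invertible and every `T Γ x` with
`x ∈ B₁ᵐ` is `T Γ A u` for some `‖u‖₁ ≤ 2ρ`. -/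

open Finset Module

section Caratheodory
variable {𝕜 V ι : Type*} [Field 𝕜] [LinearOrder 𝕜] [IsStrictOrderedRing 𝕜]
  [AddCommGroup V] [Module 𝕜 V]

lemma exists_dependence_nonneg_sum_of_not_linearIndepOn {v : ι → V} {s : Finset ι}
    (hs : ¬LinearIndepOn 𝕜 v s) :
    ∃ g : ι → 𝕜, ∑ i ∈ s, g i • v i = 0 ∧ 0 ≤ ∑ i ∈ s, g i ∧ ∃ i ∈ s, 0 < g i := by
  obtain ⟨g, hg, i, hi, hgi⟩ := not_linearIndepOn_finset_iff.1 hs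
  wlog hsum : 0 ≤ ∑ i ∈ s, g i generalizing g
  · refine this (-g) ?_ (neg_ne_zero.2 hgi) ?_
    · simp only [Pi.neg_apply, neg_smul, sum_neg_distrib, hg, neg_zero]
    · simp only [Pi.neg_apply, sum_neg_distrib]; linarith
  refine ⟨g, hg, hsum, ?_⟩
  by_contra! hneg
  have : ∑ i ∈ s, g i < ∑ i ∈ s, (0 : 𝕜) :=
    sum_lt_sum hneg ⟨i, hi, lt_of_le_of_ne (hneg i hi) hgi⟩
  simp only [sum_const_zero] at this
  linarith

variable [DecidableEq ι]

lemma exists_nonneg_combination_erase {v : ι → V} {s : Finset ι} (hs : ¬LinearIndepOn 𝕜 v s)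
    {c : ι → 𝕜} (hc : ∀ i ∈ s, 0 ≤ c i) :
    ∃ i₀ ∈ s, ∃ c' : ι → 𝕜, (∀ i ∈ s.erase i₀, 0 ≤ c' i) ∧
      ∑ i ∈ s.erase i₀, c' i ≤ ∑ i ∈ s, c i ∧
      ∑ i ∈ s.erase i₀, c' i • v i = ∑ i ∈ s, c i • v i := by
  -- Move along `-g` until a coordinate vanishes; `0 ≤ ∑ g` keeps the total weight from growing.
  obtain ⟨g, hg, hgsum, hpos⟩ := exists_dependence_nonneg_sum_of_not_linearIndepOn hs
  obtain ⟨i₀, hi₀, hmin⟩ := exists_min_image (s.filter (0 < g ·)) (fun i => c i / g i)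
    (by simpa [Finset.Nonempty] using hpos)
  rw [mem_filter] at hi₀
  set t := c i₀ / g i₀
  have ht : 0 ≤ t := div_nonneg (hc _ hi₀.1) hi₀.2.le
  have hzero : c i₀ - t * g i₀ = 0 := by simp [t, div_mul_cancel₀ _ hi₀.2.ne']
  refine ⟨i₀, hi₀.1, fun i => c i - t * g i, fun i hi => ?_, ?_, ?_⟩
  · have hi := mem_of_mem_erase hi
    rcases le_or_gt (g i) 0 with hgi | hgi
    · nlinarith [hc i hi]
    · have := hmin i (mem_filter.2 ⟨hi, hgi⟩)
      rw [le_div_iff₀ hgi] at this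
      linarith
  · rw [sum_erase s (f := fun i => c i - t * g i) hzero, sum_sub_distrib, ← mul_sum]
    nlinarith
  · rw [sum_erase s (f := fun i => (c i - t * g i) • v i) (by rw [hzero, zero_smul])]
    simp only [sub_smul, mul_smul, sum_sub_distrib, ← smul_sum, hg, smul_zero, sub_zero]

theorem exists_sparse_nonneg_combination [Module.Finite 𝕜 V] (v : ι → V) (s : Finset ι)
    (c : ι → 𝕜) (hc : ∀ i ∈ s, 0 ≤ c i) :
    ∃ t ⊆ s, #t ≤ finrank 𝕜 V ∧ ∃ c' : ι → 𝕜, (∀ i ∈ t, 0 ≤ c' i) ∧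
      ∑ i ∈ t, c' i ≤ ∑ i ∈ s, c i ∧ ∑ i ∈ t, c' i • v i = ∑ i ∈ s, c i • v i := by
  induction s using Finset.strongInduction generalizing c with
  | H s ih =>
    by_cases hs : LinearIndepOn 𝕜 v s
    · exact ⟨s, subset_rfl, by simpa using hs.fintype_card_le_finrank, c, hc, le_rfl, rfl⟩
    obtain ⟨i₀, hi₀, c', hc', hsum, hcomb⟩ := exists_nonneg_combination_erase hs hc
    obtain ⟨t, hts, hcard, c'', hc'', hsum', hcomb'⟩ := ih _ (erase_ssubset hi₀) c' hc'
    exact ⟨t, hts.trans (erase_subset _ _), hcard, c'', hc'', hsum'.trans hsum,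
      hcomb'.trans hcomb⟩

end Caratheodory

section L1
variable {ι κ : Type*} [Fintype ι]

def l1Norm (x : ι → ℝ) : ℝ := ∑ i, |x i|

lemma l1Norm_nonneg (x : ι → ℝ) : 0 ≤ l1Norm x :=
  sum_nonneg fun _ _ => abs_nonneg _

lemma l1Norm_eq_zero {x : ι → ℝ} : l1Norm x = 0 ↔ x = 0 := by
  simp [l1Norm, sum_eq_zero_iff_of_nonneg, funext_iff]

lemma l1Norm_add_le (x y : ι → ℝ) : l1Norm (x + y) ≤ l1Norm x + l1Norm y := by
  rw [l1Norm, l1Norm, l1Norm, ← sum_add_distrib]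
  exact sum_le_sum fun i _ => abs_add_le (x i) (y i)

lemma l1Norm_sub_comm (x y : ι → ℝ) : l1Norm (x - y) = l1Norm (y - x) := by
  simp only [l1Norm, Pi.sub_apply, abs_sub_comm]

lemma l1Norm_smul (a : ℝ) (x : ι → ℝ) : l1Norm (a • x) = |a| * l1Norm x := by
  simp [l1Norm, abs_mul, mul_sum]

lemma l1Norm_sum_le {α : Type*} (s : Finset α) (f : α → ι → ℝ) :
    l1Norm (∑ a ∈ s, f a) ≤ ∑ a ∈ s, l1Norm (f a) := by
  simp only [l1Norm, Finset.sum_apply]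
  rw [sum_comm]
  exact sum_le_sum fun i _ => abs_sum_le_sum_abs _ _

variable [DecidableEq ι]

lemma l1Norm_single_one (i : ι) : l1Norm (Pi.single i (1 : ℝ)) = 1 := by
  simp [l1Norm, Pi.single_apply, apply_ite abs]

lemma LinearMap.apply_eq_sum_smul_single {M : Type*} [AddCommGroup M] [Module ℝ M]
    (f : (ι → ℝ) →ₗ[ℝ] M) (x : ι → ℝ) : f x = ∑ i, x i • f (Pi.single i 1) := by
  conv_lhs => rw [← (Pi.basisFun ℝ ι).sum_repr x]
  simp

variable [Fintype κ]

lemma l1Norm_map_le (f : (ι → ℝ) →ₗ[ℝ] (κ → ℝ)) {C : ℝ}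
    (hf : ∀ i, l1Norm (f (Pi.single i 1)) ≤ C) (x : ι → ℝ) :
    l1Norm (f x) ≤ C * l1Norm x :=
  calc l1Norm (f x) ≤ ∑ i, l1Norm (x i • f (Pi.single i 1)) := by
        rw [f.apply_eq_sum_smul_single]; exact l1Norm_sum_le _ _
    _ = ∑ i, |x i| * l1Norm (f (Pi.single i 1)) := by simp only [l1Norm_smul]
    _ ≤ ∑ i, |x i| * C := by gcongr with i; exact hf i
    _ = C * l1Norm x := by rw [← sum_mul, mul_comm, l1Norm]

end L1

section Perturbation
variable {ι : Type*} [Fintype ι]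

lemma exists_preimage_of_l1Norm_sub_smul_le (f : (ι → ℝ) →ₗ[ℝ] (ι → ℝ)) {a δ : ℝ}
    (hδ : δ < |a|) (hf : ∀ u, l1Norm (f u - a • u) ≤ δ * l1Norm u) (y : ι → ℝ) :
    ∃ u, f u = y ∧ (|a| - δ) * l1Norm u ≤ l1Norm y := by
  have hlower : ∀ u, (|a| - δ) * l1Norm u ≤ l1Norm (f u) := fun u => by
    have htri := l1Norm_add_le (f u) (a • u - f u)
    rw [add_sub_cancel, l1Norm_smul, l1Norm_sub_comm] at htri
    linarith [hf u]
  have hinj : Function.Injective f := (injective_iff_map_eq_zero f).2 fun u hu => by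
    have := hlower u
    rw [hu, l1Norm_eq_zero.2 rfl] at this
    exact l1Norm_eq_zero.1 <|
      (nonpos_of_mul_nonpos_right this (sub_pos.2 hδ)).antisymm (l1Norm_nonneg u)
  obtain ⟨u, rfl⟩ := LinearMap.injective_iff_surjective.1 hinj y
  exact ⟨u, rfl, hlower u⟩

end Perturbation

lemma exists_int_mul_trunc {ε : ℝ} (hε : 0 < ε) (t : ℝ) :
    ∃ z : ℤ, |ε * z| ≤ |t| ∧ |ε * z - t| ≤ ε := by
  wlog ht : 0 ≤ t generalizing t
  · obtain ⟨z, hz, hzt⟩ := this (-t) (by linarith)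
    refine ⟨-z, ?_, ?_⟩
    · simpa using hz
    · rw [← abs_neg]; convert hzt using 2; push_cast; ring
  have hfloor : (⌊t / ε⌋ : ℝ) ≤ t / ε := Int.floor_le _
  have hfloor' : t / ε < ⌊t / ε⌋ + 1 := Int.lt_floor_add_one _
  rw [le_div_iff₀' hε] at hfloor
  rw [div_lt_iff₀' hε] at hfloor'
  have h0 : 0 ≤ ε * ⌊t / ε⌋ :=
    mul_nonneg hε.le (by exact_mod_cast Int.floor_nonneg.2 (div_nonneg ht hε.le))
  refine ⟨⌊t / ε⌋, ?_, ?_⟩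
  · rwa [abs_of_nonneg h0, abs_of_nonneg ht]
  · rw [abs_le]; constructor <;> linarith

section Sparse
variable {ι κ V : Type*} [Fintype ι] [DecidableEq ι]

theorem exists_sparse_preimage [AddCommGroup V] [Module ℝ V] [Module.Finite ℝ V]
    (L : (ι → ℝ) →ₗ[ℝ] V) (x : ι → ℝ) :
    ∃ t : Finset ι, #t ≤ finrank ℝ V ∧ ∃ x' : ι → ℝ,
      (∀ i ∉ t, x' i = 0) ∧ l1Norm x' ≤ l1Norm x ∧ L x' = L x := by
  obtain ⟨t, -, ht, c, hc, hsum, hcomb⟩ := exists_sparse_nonneg_combination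
    (fun i => (SignType.sign (x i) : ℝ) • L (Pi.single i 1)) univ (fun i => |x i|)
    (fun i _ => abs_nonneg _)
  refine ⟨t, ht, fun i => if i ∈ t then c i * SignType.sign (x i) else 0,
    fun i hi => if_neg hi, ?_, ?_⟩
  · have hsign : ∀ i, |(SignType.sign (x i) : ℝ)| ≤ 1 := fun i => by
      rcases SignType.sign (x i) with _ | _ | _ <;> simp
    calc l1Norm _ = ∑ i ∈ t, |c i * SignType.sign (x i)| := by
          simp only [l1Norm, apply_ite abs, abs_zero, sum_ite_mem, univ_inter]
      _ ≤ ∑ i ∈ t, c i := sum_le_sum fun i hi => by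
          rw [abs_mul, abs_of_nonneg (hc i hi)]
          exact mul_le_of_le_one_right (hc i hi) (hsign i)
      _ ≤ l1Norm x := hsum
  · rw [L.apply_eq_sum_smul_single, L.apply_eq_sum_smul_single x]
    simp only [ite_smul, zero_smul, sum_ite_mem, univ_inter, mul_smul]
    simpa only [smul_smul, abs_mul_sign] using hcomb

variable [Fintype κ]

lemma exists_discrete_sparse_approx (L : (ι → ℝ) →ₗ[ℝ] (κ → ℝ))
    (hL : ∀ x, l1Norm (L x) ≤ l1Norm x) {ε : ℝ} (hε : 0 < ε) (x : ι → ℝ) :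
    ∃ a : ι → ℝ, (∀ i, ∃ z : ℤ, a i = ε * z) ∧ l1Norm a ≤ l1Norm x ∧
      {i | a i ≠ 0}.ncard ≤ Fintype.card κ ∧ l1Norm (L a - L x) ≤ ε * Fintype.card κ := by
  obtain ⟨t, ht, x', hx't, hx'x, hLx'⟩ := exists_sparse_preimage L x
  rw [Module.finrank_fintype_fun_eq_card] at ht
  choose z hz using fun i => exists_int_mul_trunc hε (x' i)
  have hzero : ∀ i ∉ t, ε * z i = 0 := fun i hi =>
    abs_nonpos_iff.1 (by simpa [hx't i hi] using (hz i).1)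
  refine ⟨fun i => ε * z i, fun i => ⟨z i, rfl⟩, (sum_le_sum fun i _ => (hz i).1).trans hx'x,
    ?_, ?_⟩
  · calc {i | ε * z i ≠ 0}.ncard ≤ (t : Set ι).ncard :=
          Set.ncard_le_ncard (fun i hi => not_imp_comm.1 (hzero i) hi)
      _ ≤ Fintype.card κ := by rwa [Set.ncard_coe_finset]
  · rw [← hLx', ← map_sub]
    calc l1Norm (L _) ≤ ∑ i ∈ t, |ε * z i - x' i| := by
          refine (hL _).trans_eq (sum_subset (subset_univ t) fun i _ hi => ?_).symm
          simp [hzero i hi, hx't i hi]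
      _ ≤ ∑ _i ∈ t, ε := sum_le_sum fun i _ => (hz i).2
      _ ≤ ε * Fintype.card κ := by
          rw [sum_const, nsmul_eq_mul, mul_comm]
          gcongr

end Sparse

lemma inv_two_mul_le_abs_inv_sub {n : ℕ} (hn : 2 ≤ n) {ρ ε : ℝ} (hρ : 0 < ρ) (hε : 0 ≤ ε)
    (h : ε * ρ * n ^ 2 ≤ 1) : (2 * ρ)⁻¹ ≤ |ρ⁻¹| - ε * n := by
  rw [abs_of_pos (by positivity)]
  have hn' : ε * ρ * n * 2 ≤ ε * ρ * n * n := by gcongr; exact_mod_cast hn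
  field_simp
  nlinarith

lemma l1Norm_map_le_of_mapsTo {k l : ℕ} (f : (Fin k → ℝ) →ₗ[ℝ] (Fin l → ℝ))
    (hf : Set.MapsTo f (B1 k) (B1 l)) (x : Fin k → ℝ) : l1Norm (f x) ≤ l1Norm x := by
  simpa using l1Norm_map_le f (fun i => hf (l1Norm_single_one i).le) x

lemma mulVec_mem_smul_image_B1 {k l : ℕ} (B : Matrix (Fin l) (Fin k) ℝ) {r : ℝ} (hr : 0 < r)
    {u : Fin k → ℝ} (hu : l1Norm u ≤ r) : B *ᵥ u ∈ r • (B.mulVec '' B1 k) := by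
  refine ⟨B *ᵥ (r⁻¹ • u), ⟨r⁻¹ • u, ?_, rfl⟩, ?_⟩
  · change l1Norm (r⁻¹ • u) ≤ 1
    rw [l1Norm_smul, abs_inv, abs_of_pos hr]
    exact inv_mul_le_one_of_le₀ hu hr.le
  · simp only [Matrix.mulVec_smul, smul_smul, mul_inv_cancel₀ hr.ne', one_smul]

theorem discretized_coefficient_representation_general (n m : ℕ) (hn : 2 ≤ n)
    (ρ ε : ℝ) (hρ : 1 ≤ ρ) (hε0 : 0 < ε) (hερ : ε * ρ * n ^ 2 ≤ 1)
    (Γ : Matrix (Fin n) (Fin m) ℝ)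
    (hT : ∃ T : (Fin n → ℝ) ≃ₗ[ℝ] (Fin n → ℝ),
      T '' (Γ.mulVec '' B1 m) ⊆ B1 n ∧ B1 n ⊆ ρ • (T '' (Γ.mulVec '' B1 m))) :
    ∃ A ∈ AmnEps m n ε, Γ.mulVec '' B1 m ⊆ (2 * ρ) • ((Γ * A).mulVec '' B1 n) := by
  obtain ⟨T, hTΓ, hρT⟩ := hT
  have hρ0 : 0 < ρ := by linarith
  set L := T.toLinearMap ∘ₗ Γ.mulVecLin
  have hL := l1Norm_map_le_of_mapsTo L fun x hx => hTΓ ⟨_, ⟨x, hx, rfl⟩, rfl⟩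
  have hpre : ∀ j : Fin n, ∃ x, l1Norm x ≤ 1 ∧ L x = ρ⁻¹ • Pi.single j 1 := fun j => by
    obtain ⟨_, ⟨_, ⟨x, hx, rfl⟩, rfl⟩, hxj⟩ := hρT (l1Norm_single_one j).le
    exact ⟨x, hx, by rw [← hxj, inv_smul_smul₀ hρ0.ne']; rfl⟩
  choose x hx1 hxL using hpre
  choose a haε ha1 hasupp haL using fun j => exists_discrete_sparse_approx L hL hε0 (x j)
  set A : Matrix (Fin m) (Fin n) ℝ := (Matrix.of a)ᵀ
  set M := T.toLinearMap ∘ₗ (Γ * A).mulVecLin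
  have hM : ∀ u, l1Norm (M u - ρ⁻¹ • u) ≤ ε * n * l1Norm u := by
    refine l1Norm_map_le (M - ρ⁻¹ • LinearMap.id) fun j => ?_
    simpa [M, L, A, ← Matrix.mulVec_mulVec, Matrix.mulVec_single_one, ← hxL] using haL j
  have hgap := inv_two_mul_le_abs_inv_sub hn hρ0 hε0.le hερ
  refine ⟨A, ⟨fun j => ⟨(ha1 j).trans (hx1 j), by simpa [A] using hasupp j⟩,
    fun i j => haε j i⟩, ?_⟩
  rintro _ ⟨y, hy, rfl⟩
  have h2ρ : 0 < (2 * ρ)⁻¹ := by positivity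
  obtain ⟨u, hu, hul⟩ :=
    exists_preimage_of_l1Norm_sub_smul_le M (by linarith) hM (T (Γ *ᵥ y))
  have hu2 : l1Norm u ≤ 2 * ρ := by
    have := (mul_le_mul_of_nonneg_right hgap (l1Norm_nonneg u)).trans
      (hul.trans (hTΓ ⟨_, ⟨y, hy, rfl⟩, rfl⟩))
    rwa [inv_mul_le_iff₀ (by positivity), mul_one] at this
  rw [T.injective hu.symm]
  exact mulVec_mem_smul_image_B1 (Γ * A) (by positivity) hu2

/-- on the Banach–Mazur event, a discretized coefficient matrix
`A ∈ A_{m,n}(ε)` may be chosen, at the cost of doubling `ρ`. -/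
theorem discretized_coefficient_representation (n m : ℕ) (hn : 2 ≤ n) (hnm : n ≤ m)
    (ρ ε : ℝ) (hρ : 1 ≤ ρ) (hε0 : 0 < ε) (hε1 : ε ≤ 1) (hερ : ε * ρ * n ^ 2 ≤ 1)
    (Γ : Matrix (Fin n) (Fin m) ℝ)
    (hT : ∃ T : (Fin n → ℝ) ≃ₗ[ℝ] (Fin n → ℝ),
      T '' (Γ.mulVec '' B1 m) ⊆ B1 n ∧ B1 n ⊆ ρ • (T '' (Γ.mulVec '' B1 m))) :
    ∃ A ∈ AmnEps m n ε, Γ.mulVec '' B1 m ⊆ (2 * ρ) • ((Γ * A).mulVec '' B1 n) :=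
  discretized_coefficient_representation_general n m hn ρ ε hρ hε0 hερ Γ hT
end
end

section
/- Let n, m ∈ ℕ with n, m ≥ 1, let s ≥ 1 be real, ρ > 0, Γ ∈ ℝ^{n×m}, and let A ∈ ℝ^{m×n} have every column a satisfying ‖a‖₁ ≤ 1. Define A^{(K)}, A^{(U)} ∈ ℝ^{m×n} entrywise by A^{(K)}_{ji} = A_{ji}·1_{{|A_{ji}| ≥ 1/s}} and A^{(U)}_{ji} = A_{ji}·1_{{|A_{ji}| < 1/s}}. For i ∈ [n] set v_i := Γ A^{(K)} e_i and u_i := Γ A^{(U)} e_i, and define w_i := v_i for 1 ≤ i ≤ n and w_{n+i} := u_i for 1 ≤ i ≤ n. Then 2ρ·(ΓA)(B₁ⁿ) ⊆ 4ρ·⋃_{I ⊆ [2n], |I| = n} conv{± w_i : i ∈ I}. -/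
/-!
Since `A = A^(K) + A^(U)`, for `x ∈ B₁ⁿ` the vector `½ ΓAx = Σ (xᵢ/2) vᵢ + Σ (xᵢ/2) uᵢ` is an
absolutely convex combination of the `2n` vectors `w` of total weight `‖x‖₁ ≤ 1`. By a
Carathéodory argument in `ℝⁿ`, `n` of them suffice: as long as more than `n` vectors carry
weight they are linearly dependent, and moving the coefficients along a relation whose
coefficient sum is nonpositive kills one of them without increasing the total weight.
Hence `2ρ ΓAx = 4ρ (½ ΓAx)` lies in the union.
-/

open MeasureTheory Matrix
open scoped ENNReal NNReal Pointwise

noncomputable section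

/-- Absolute convex hull of a finite family of vectors. -/
def absConv {ι V : Type*} [AddCommGroup V] [Module ℝ V] (s : Finset ι) (x : ι → V) : Set V :=
  {y | ∃ a : ι → ℝ, ∑ i ∈ s, |a i| ≤ 1 ∧ y = ∑ i ∈ s, a i • x i}

open Finset Module

section Caratheodory

variable {ι V : Type*} [AddCommGroup V] [Module ℝ V] [FiniteDimensional ℝ V]

theorem exists_relation_sum_nonpos_of_finrank_lt_card {z : ι → V} {J : Finset ι}
    (hJ : finrank ℝ V < #J) :
    ∃ c : ι → ℝ, ∑ j ∈ J, c j • z j = 0 ∧ ∑ j ∈ J, c j ≤ 0 ∧ ∃ j ∈ J, c j < 0 := by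
  have hdep : ¬ LinearIndepOn ℝ z (J : Set ι) := fun h => by
    have := h.fintype_card_le_finrank
    simp only [Finset.coe_sort_coe, Fintype.card_coe] at this
    omega
  obtain ⟨f, hf, i, hi, hfi⟩ := not_linearIndepOn_finset_iff.mp hdep
  have neg_coeff : ∀ c : ι → ℝ, ∑ j ∈ J, c j ≤ 0 → c i ≠ 0 → ∃ j ∈ J, c j < 0 := by
    intro c hc hci
    by_contra! hnn
    exact hci ((sum_eq_zero_iff_of_nonneg hnn).mp (hc.antisymm (sum_nonneg hnn)) i hi)
  rcases le_total (∑ j ∈ J, f j) 0 with hle | hge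
  · exact ⟨f, hf, hle, neg_coeff f hle hfi⟩
  · have hle : ∑ j ∈ J, -f j ≤ 0 := by rw [sum_neg_distrib]; linarith
    refine ⟨-f, ?_, hle, neg_coeff (-f) hle (neg_ne_zero.mpr hfi)⟩
    simp only [Pi.neg_apply, neg_smul, sum_neg_distrib, hf, neg_zero]

theorem exists_nonneg_coeff_eq_zero_of_finrank_lt_card {z : ι → V} {J : Finset ι}
    (hJ : finrank ℝ V < #J) {p : ι → ℝ} (hp : ∀ j ∈ J, 0 ≤ p j) :
    ∃ j ∈ J, ∃ q : ι → ℝ, (∀ i ∈ J, 0 ≤ q i) ∧ q j = 0 ∧ ∑ i ∈ J, q i ≤ ∑ i ∈ J, p i ∧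
      ∑ i ∈ J, q i • z i = ∑ i ∈ J, p i • z i := by
  obtain ⟨c, hcz, hcsum, hneg⟩ := exists_relation_sum_nonpos_of_finrank_lt_card (z := z) hJ
  obtain ⟨j, hjT, hjmin⟩ := exists_min_image (J.filter (c · < 0)) (fun i => p i / -c i)
    (let ⟨i, hi, hci⟩ := hneg; ⟨i, mem_filter.mpr ⟨hi, hci⟩⟩)
  obtain ⟨hj, hcj⟩ := mem_filter.mp hjT
  set t := p j / -c j
  have ht : 0 ≤ t := div_nonneg (hp j hj) (by linarith)
  refine ⟨j, hj, fun i => p i + t * c i, fun i hi => ?_, ?_, ?_, ?_⟩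
  · rcases le_or_gt 0 (c i) with hci | hci
    · nlinarith [hp i hi]
    · have := (le_div_iff₀ (neg_pos.mpr hci)).mp (hjmin i (mem_filter.mpr ⟨hi, hci⟩))
      linarith
  · simp only [t, div_neg, neg_mul, div_mul_cancel₀ _ hcj.ne, add_neg_cancel]
  · rw [sum_add_distrib, ← mul_sum]
    nlinarith
  · simp only [add_smul, sum_add_distrib, mul_smul, ← smul_sum, hcz, smul_zero, add_zero]

theorem exists_subset_card_le_finrank_sum_smul_eq (z : ι → V) (J : Finset ι) (p : ι → ℝ)
    (hp : ∀ j ∈ J, 0 ≤ p j) (hsum : ∑ j ∈ J, p j ≤ 1) :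
    ∃ K ⊆ J, #K ≤ finrank ℝ V ∧ ∃ q : ι → ℝ, (∀ j ∈ K, 0 ≤ q j) ∧ ∑ j ∈ K, q j ≤ 1 ∧
      ∑ j ∈ K, q j • z j = ∑ j ∈ J, p j • z j := by
  classical
  induction J using Finset.strongInduction generalizing p with
  | H J ih =>
  by_cases hJ : #J ≤ finrank ℝ V
  · exact ⟨J, subset_rfl, hJ, p, hp, hsum, rfl⟩
  obtain ⟨j, hj, q, hq, hqj, hqsum, hqz⟩ :=
    exists_nonneg_coeff_eq_zero_of_finrank_lt_card (z := z) (not_le.mp hJ) hp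
  obtain ⟨K, hK, hKcard, r, hr, hrsum, hrz⟩ :=
    ih (J.erase j) (erase_ssubset hj) q (fun i hi => hq i (mem_of_mem_erase hi))
      (by rw [sum_erase _ hqj]; linarith)
  refine ⟨K, hK.trans (erase_subset _ _), hKcard, r, hr, hrsum, ?_⟩
  rw [hrz, sum_erase _ (by rw [hqj, zero_smul]), hqz]

theorem exists_subset_card_le_finrank_of_mem_absConv {w : ι → V} {J : Finset ι} {y : V}
    (hy : y ∈ absConv J w) : ∃ K ⊆ J, #K ≤ finrank ℝ V ∧ y ∈ absConv K w := by
  obtain ⟨a, ha, rfl⟩ := hy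
  obtain ⟨K, hK, hKcard, q, hq, hqsum, hqz⟩ :=
    exists_subset_card_le_finrank_sum_smul_eq (fun j => (SignType.sign (a j) : ℝ) • w j) J
      (fun j => |a j|) (fun j _ => abs_nonneg _) ha
  refine ⟨K, hK, hKcard, fun j => q j * SignType.sign (a j), ?_, ?_⟩
  · refine le_trans (sum_le_sum fun j hj => ?_) hqsum
    rw [abs_mul, abs_of_nonneg (hq j hj)]
    refine mul_le_of_le_one_right (hq j hj) ?_
    rcases lt_trichotomy (a j) 0 with h | h | h <;> simp [h]
  · calc ∑ j ∈ J, a j • w j = ∑ j ∈ J, |a j| • (SignType.sign (a j) : ℝ) • w j := by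
          simp only [smul_smul, abs_mul_sign]
      _ = ∑ j ∈ K, q j • (SignType.sign (a j) : ℝ) • w j := hqz.symm
      _ = _ := by simp only [smul_smul]

end Caratheodory

theorem absConv_mono {ι V : Type*} [AddCommGroup V] [Module ℝ V] {K I : Finset ι}
    (hKI : K ⊆ I) (w : ι → V) : absConv K w ⊆ absConv I w := by
  classical
  rintro _ ⟨a, ha, rfl⟩
  refine ⟨fun j => if j ∈ K then a j else 0, ?_, ?_⟩
  · rw [← sum_subset hKI (fun j _ hj => by simp [hj])]
    exact (sum_congr rfl fun j hj => by simp [hj]).trans_le ha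
  · rw [← sum_subset hKI (fun j _ hj => by simp [hj])]
    exact sum_congr rfl fun j hj => by simp [hj]

theorem exists_card_eq_of_mem_absConv {ι V : Type*} [AddCommGroup V] [Module ℝ V]
    [FiniteDimensional ℝ V] {w : ι → V} {J : Finset ι} {y : V} (hy : y ∈ absConv J w) {k : ℕ}
    (hk : finrank ℝ V ≤ k) (hkJ : k ≤ #J) : ∃ I ⊆ J, #I = k ∧ y ∈ absConv I w := by
  obtain ⟨K, hKJ, hK, hyK⟩ := exists_subset_card_le_finrank_of_mem_absConv hy
  obtain ⟨I, hKI, hIJ, hI⟩ := exists_subsuperset_card_eq hKJ (hK.trans hk) hkJ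
  exact ⟨I, hIJ, hI, absConv_mono hKI w hyK⟩

theorem half_smul_add_mulVec_mem_absConv {κ : Type*} {n : ℕ} (M N : Matrix κ (Fin n) ℝ)
    {x : Fin n → ℝ} (hx : x ∈ B1 n) :
    (1 / 2 : ℝ) • ((M + N) *ᵥ x) ∈ absConv univ (Sum.elim (fun i => Mᵀ i) (fun i => Nᵀ i)) := by
  have columns : ∀ B : Matrix κ (Fin n) ℝ, B *ᵥ x = ∑ i, x i • Bᵀ i := fun B => by
    simp [mulVec_eq_sum]
  refine ⟨Sum.elim (fun i => x i / 2) (fun i => x i / 2), ?_, ?_⟩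
  · calc ∑ j, |Sum.elim (fun i => x i / 2) (fun i => x i / 2) j| = ∑ i, |x i| := by
          simp only [Fintype.sum_sum_type, Sum.elim_inl, Sum.elim_inr, abs_div, abs_two, ← sum_div]
          ring
      _ ≤ 1 := hx
  · rw [add_mulVec, columns, columns]
    simp only [smul_add, smul_sum, smul_smul, Fintype.sum_sum_type, Sum.elim_inl, Sum.elim_inr,
      div_eq_inv_mul, mul_one]

theorem bridge_lemma_general (n m : ℕ) (s ρ : ℝ) (Γ : Matrix (Fin n) (Fin m) ℝ) (A : Matrix (Fin m) (Fin n) ℝ) :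
    -- the `K`-part and `U`-part of the coefficient matrix
    let AK : Matrix (Fin m) (Fin n) ℝ := Matrix.of fun j i => if 1 / s ≤ |A j i| then A j i else 0
    let AU : Matrix (Fin m) (Fin n) ℝ := Matrix.of fun j i => if |A j i| < 1 / s then A j i else 0
    -- the `2n` generators: `w i = v i = Γ A^(K) e_i` and `w (n+i) = u i = Γ A^(U) e_i`
    let w : Fin n ⊕ Fin n → Fin n → ℝ :=
      Sum.elim (fun i => (Γ * AK)ᵀ i) (fun i => (Γ * AU)ᵀ i)
    (2 * ρ) • ((Γ * A).mulVec '' B1 n) ⊆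
      (4 * ρ) • ⋃ (I : Finset (Fin n ⊕ Fin n)) (_ : I.card = n), absConv I w := by
  intro AK AU w
  have hsplit : Γ * A = Γ * AK + Γ * AU := by
    rw [← Matrix.mul_add]
    congr 1
    ext j i
    simp only [AK, AU, Matrix.add_apply, of_apply]
    split_ifs <;> linarith
  rintro _ ⟨_, ⟨x, hx, rfl⟩, rfl⟩
  obtain ⟨I, -, hI, hyI⟩ := exists_card_eq_of_mem_absConv
    (half_smul_add_mulVec_mem_absConv (Γ * AK) (Γ * AU) hx) (finrank_fin_fun ℝ).le (by simp)
  refine ⟨(1 / 2 : ℝ) • ((Γ * A) *ᵥ x), Set.mem_iUnion₂.mpr ⟨I, hI, hsplit ▸ hyI⟩, ?_⟩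
  dsimp only
  rw [smul_smul]
  congr 1
  ring

/-- bridge lemma: after the `K/U` coefficient split at level `1/s`, the set
`2ρ·(ΓA)(B₁ⁿ)` is contained in `4ρ` times the union of the mixed cross-polytopes generated
by `n` of the `2n` vectors `v₁,…,vₙ,u₁,…,uₙ`. -/
theorem bridge_lemma (n m : ℕ) (hn : 1 ≤ n) (hm : 1 ≤ m) (s ρ : ℝ) (hs : 1 ≤ s)
    (hρ : 0 < ρ) (Γ : Matrix (Fin n) (Fin m) ℝ) (A : Matrix (Fin m) (Fin n) ℝ)
    (hA : ∀ i, (∑ j, |A j i|) ≤ 1) :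
    -- the `K`-part and `U`-part of the coefficient matrix
    let AK : Matrix (Fin m) (Fin n) ℝ := Matrix.of fun j i => if 1 / s ≤ |A j i| then A j i else 0
    let AU : Matrix (Fin m) (Fin n) ℝ := Matrix.of fun j i => if |A j i| < 1 / s then A j i else 0
    -- the `2n` generators: `w i = v i = Γ A^(K) e_i` and `w (n+i) = u i = Γ A^(U) e_i`
    let w : Fin n ⊕ Fin n → Fin n → ℝ :=
      Sum.elim (fun i => (Γ * AK)ᵀ i) (fun i => (Γ * AU)ᵀ i)
    (2 * ρ) • ((Γ * A).mulVec '' B1 n) ⊆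
      (4 * ρ) • ⋃ (I : Finset (Fin n ⊕ Fin n)) (_ : I.card = n), absConv I w :=
  bridge_lemma_general n m s ρ Γ A
end
end

section
/- There exist universal constants C₀, c > 0 such that the following holds. Let n ≥ 3 be an integer, ρ ≥ 1, and let s be an integer with 1 ≤ s ≤ n. Set m := n³, ε := (ρ n²)^{−1}, L := C₀·√((n/s)·log(nρ)), and let U_ε := { u ∈ (εℤ)^m : |supp(u)| ≤ n and ‖u‖₂² ≤ 1/s }. Let Γ be an n×m random matrix with independent N(0,1) entries. Then ℙ( ∃ u ∈ U_ε : ‖Γu‖₂ > L ) ≤ exp(−c·n·log(nρ)). -/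
open MeasureTheory ProbabilityTheory Matrix
open scoped ENNReal NNReal Pointwise

noncomputable section

/-- Standard Gaussian measure on `Fin d → ℝ`. -/
def gaussianPi (d : ℕ) : Measure (Fin d → ℝ) :=
  Measure.pi fun _ => gaussianReal 0 1

/-- Law of an `n × m` random matrix (encoded as `Fin n → Fin m → ℝ`) with i.i.d. `N(0,1)` entries. -/
def gaussianMatrix (n m : ℕ) : Measure (Fin n → Fin m → ℝ) :=
  Measure.pi fun _ => gaussianPi m

/-!
For a fixed `u`, the coordinates of `Γu` are independent `N(0, ‖u‖²)` variables, so
`E exp(λ‖Γu‖²) = (1 - 2λ‖u‖²)^(-n/2)`, and the Chernoff bound with `λ = s/4` gives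
`ℙ(‖Γu‖ > L) ≤ 2^(n/2) exp(-16 n log(nρ))` whenever `‖u‖² ≤ 1/s`. Every `u ∈ U_ε` is `ε` times
an integer vector with entries in `[-ρn², ρn²]` and at most `n` nonzero entries; there are at
most `(m(2⌈ρn²⌉+1))^n ≤ (nρ)^(8n)` of them, and a union bound finishes the proof.
-/

instance isProbabilityMeasure_gaussianPi (d : ℕ) : IsProbabilityMeasure (gaussianPi d) := by
  unfold gaussianPi; infer_instance

open Real Finset

lemma integral_exp_quadratic {b : ℝ} (hb : b < 0) (c d : ℝ) :
    ∫ x : ℝ, exp (b * x ^ 2 + c * x + d) = √(π / -b) * exp (d - c ^ 2 / (4 * b)) := by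
  have h := integral_cexp_quadratic (b := b) (by simpa using hb) c d
  have hpos : 0 ≤ π / -b := div_nonneg pi_pos.le (by linarith)
  apply Complex.ofReal_injective
  rw [← integral_complex_ofReal, sqrt_eq_rpow]
  push_cast [Complex.ofReal_cpow hpos]
  simpa using h

lemma integrable_exp_quadratic {b : ℝ} (hb : b < 0) (c d : ℝ) :
    Integrable fun x : ℝ => exp (b * x ^ 2 + c * x + d) := by
  refine (integrable_cexp_quadratic' (b := b) (by simpa using hb) c d).re.congr
    (.of_forall fun x => ?_)
  simp only [← Complex.ofReal_pow, ← Complex.ofReal_mul, ← Complex.ofReal_add,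
    RCLike.re_to_complex, Complex.exp_ofReal_re]

lemma lintegral_exp_mul_sq_gaussianReal {l a : ℝ} (w : ℝ) (h : 2 * l * a ^ 2 < 1) :
    ∫⁻ x, ENNReal.ofReal (exp (l * (w + a * x) ^ 2)) ∂gaussianReal 0 1
      = ENNReal.ofReal ((√(1 - 2 * l * a ^ 2))⁻¹ * exp (l * w ^ 2 / (1 - 2 * l * a ^ 2))) := by
  have hA : 0 < 1 - 2 * l * a ^ 2 := by linarith
  have hb : l * a ^ 2 - 1 / 2 < 0 := by linarith
  have hdensity : ∀ x, gaussianPDFReal 0 1 x * exp (l * (w + a * x) ^ 2)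
      = (√(2 * π))⁻¹ * exp ((l * a ^ 2 - 1 / 2) * x ^ 2 + 2 * l * a * w * x + l * w ^ 2) := by
    intro x
    simp only [gaussianPDFReal, NNReal.coe_one, mul_one, sub_zero]
    rw [mul_assoc, ← exp_add]
    congr 2
    ring
  rw [gaussianReal_of_var_ne_zero 0 one_ne_zero,
    lintegral_withDensity_eq_lintegral_mul _ (measurable_gaussianPDF 0 1) (by fun_prop)]
  simp only [Pi.mul_apply, gaussianPDF, ← ENNReal.ofReal_mul (gaussianPDFReal_nonneg 0 1 _),
    hdensity]
  rw [← ofReal_integral_eq_lintegral_ofReal ((integrable_exp_quadratic hb _ _).const_mul _)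
    (.of_forall fun _ => by positivity), integral_const_mul, integral_exp_quadratic hb]
  obtain ⟨A, hAdef⟩ : ∃ A, A = 1 - 2 * l * a ^ 2 := ⟨_, rfl⟩
  rw [← hAdef] at hA ⊢
  have hb' : l * a ^ 2 - 1 / 2 = -A / 2 := by rw [hAdef]; ring
  have hpi : π / -(l * a ^ 2 - 1 / 2) = 2 * π / A := by
    rw [hb']
    field_simp
  rw [hpi, sqrt_div' _ hA.le, ← mul_assoc, div_eq_mul_inv, ← mul_assoc,
    inv_mul_cancel₀ (by positivity), one_mul, hb']
  congr 3
  field_simp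
  linear_combination 4 * l * w ^ 2 * hAdef

lemma lintegral_exp_mul_sq_gaussianPi {k : ℕ} (u : Fin k → ℝ) {l : ℝ} (w : ℝ)
    (h : 2 * l * ∑ j, u j ^ 2 < 1) :
    ∫⁻ x, ENNReal.ofReal (exp (l * (w + x ⬝ᵥ u) ^ 2)) ∂gaussianPi k
      = ENNReal.ofReal ((√(1 - 2 * l * ∑ j, u j ^ 2))⁻¹
          * exp (l * w ^ 2 / (1 - 2 * l * ∑ j, u j ^ 2))) := by
  induction k generalizing w with
  | zero => simp [gaussianPi]
  | succ k ih =>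
    -- Integrating out the last `k` coordinates by induction leaves a one-dimensional integral
    -- of the same shape in the first coordinate, with `l` replaced by `l / A`.
    set v := fun j => u (Fin.succ j)
    have hsum : ∑ j, u j ^ 2 = u 0 ^ 2 + ∑ j, v j ^ 2 := Fin.sum_univ_succ _
    rw [hsum] at h ⊢
    set A := 1 - 2 * l * ∑ j, v j ^ 2 with hAdef
    have hA : 0 < A := by
      have : 0 ≤ ∑ j, v j ^ 2 := by positivity
      rcases le_or_gt 0 l with hl | hl <;> nlinarith
    have hB : 2 * (l / A) * u 0 ^ 2 < 1 := by
      rw [mul_comm 2, mul_assoc, div_mul_eq_mul_div, div_lt_one hA, hAdef]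
      linarith
    have hAB : 1 - 2 * l * (u 0 ^ 2 + ∑ j, v j ^ 2) = A * (1 - 2 * (l / A) * u 0 ^ 2) := by
      field_simp
      rw [hAdef]
      ring
    have hprod : ∫⁻ x, ENNReal.ofReal (exp (l * (w + x ⬝ᵥ u) ^ 2)) ∂gaussianPi (k + 1)
        = ∫⁻ p, ENNReal.ofReal (exp (l * ((w + u 0 * p.1) + p.2 ⬝ᵥ v) ^ 2))
            ∂(gaussianReal 0 1).prod (gaussianPi k) := by
      rw [gaussianPi, gaussianPi, ← (measurePreserving_piFinSuccAbove
        (fun _ => gaussianReal 0 1) 0).lintegral_comp (by fun_prop)]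
      simp [dotProduct, Fin.sum_univ_succ, Fin.tail, v, add_assoc, mul_comm]
    have hsplit : ∀ y, ENNReal.ofReal ((√A)⁻¹ * exp (l * (w + u 0 * y) ^ 2 / A))
        = ENNReal.ofReal (√A)⁻¹ * ENNReal.ofReal (exp (l / A * (w + u 0 * y) ^ 2)) := by
      intro y
      rw [ENNReal.ofReal_mul (by positivity)]
      ring_nf
    rw [hprod, lintegral_prod _ (by fun_prop)]
    simp only [ih v _ (by linarith), ← hAdef, hsplit]
    rw [lintegral_const_mul _ (by fun_prop), lintegral_exp_mul_sq_gaussianReal w hB, hAB,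
      ← ENNReal.ofReal_mul (by positivity), sqrt_mul hA.le, mul_inv]
    congr 1
    field_simp

lemma lintegral_prod_apply_pi {ι α : Type*} [Fintype ι] [MeasurableSpace α] (μ : Measure α)
    [IsProbabilityMeasure μ] {F : α → ℝ≥0∞} (hF : Measurable F) :
    ∫⁻ x, ∏ i, F (x i) ∂Measure.pi (fun _ : ι => μ)
      = (∫⁻ a, F a ∂μ) ^ Fintype.card ι := by
  rw [lintegral_prod_eq_prod_lintegral_of_indepFun _ _
    (iIndepFun_pi (X := fun _ => F) fun _ => hF.aemeasurable)
    fun i => hF.comp (measurable_pi_apply i)]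
  simp_rw [(measurePreserving_eval (fun _ : ι => μ) _).lintegral_comp hF]
  simp

lemma lintegral_exp_mul_sum_sq_dotProduct_gaussianMatrix {n m : ℕ} (u : Fin m → ℝ) {l : ℝ}
    (h : 2 * l * ∑ j, u j ^ 2 < 1) :
    ∫⁻ g, ENNReal.ofReal (exp (l * ∑ i, (g i ⬝ᵥ u) ^ 2)) ∂gaussianMatrix n m
      = ENNReal.ofReal ((√(1 - 2 * l * ∑ j, u j ^ 2))⁻¹) ^ n := by
  have hrow : ∀ g : Fin n → Fin m → ℝ, ENNReal.ofReal (exp (l * ∑ i, (g i ⬝ᵥ u) ^ 2))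
      = ∏ i, ENNReal.ofReal (exp (l * (0 + g i ⬝ᵥ u) ^ 2)) := by
    intro g
    simp [mul_sum, exp_sum, ENNReal.ofReal_prod_of_nonneg fun _ _ => (exp_pos _).le]
  simp_rw [hrow]
  rw [gaussianMatrix, lintegral_prod_apply_pi _
    (F := fun x => ENNReal.ofReal (exp (l * (0 + x ⬝ᵥ u) ^ 2))) (by fun_prop),
    lintegral_exp_mul_sq_gaussianPi u 0 h]
  simp

lemma gaussianMatrix_lt_sum_sq_dotProduct_le {n m : ℕ} (u : Fin m → ℝ) {l : ℝ}
    (hl : 0 ≤ l) (h : 2 * l * ∑ j, u j ^ 2 < 1) (t : ℝ) :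
    gaussianMatrix n m {g | t < ∑ i, (g i ⬝ᵥ u) ^ 2}
      ≤ ENNReal.ofReal ((√(1 - 2 * l * ∑ j, u j ^ 2))⁻¹ ^ n * exp (-(l * t))) := by
  calc gaussianMatrix n m {g | t < ∑ i, (g i ⬝ᵥ u) ^ 2}
      ≤ gaussianMatrix n m {g | ENNReal.ofReal (exp (l * t))
          ≤ ENNReal.ofReal (exp (l * ∑ i, (g i ⬝ᵥ u) ^ 2))} := by
        refine measure_mono fun g hg => ?_
        simp only [Set.mem_ofPred_eq] at hg ⊢
        gcongr
    _ ≤ (∫⁻ g, ENNReal.ofReal (exp (l * ∑ i, (g i ⬝ᵥ u) ^ 2)) ∂gaussianMatrix n m)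
          / ENNReal.ofReal (exp (l * t)) :=
        meas_ge_le_lintegral_div (Measurable.aemeasurable (by fun_prop)) (by simp [exp_pos])
          ENNReal.ofReal_ne_top
    _ = _ := by
        rw [lintegral_exp_mul_sum_sq_dotProduct_gaussianMatrix u h,
          ← ENNReal.ofReal_pow (by positivity), ← ENNReal.ofReal_div_of_pos (exp_pos _),
          Real.exp_neg, div_eq_mul_inv]

lemma gaussianMatrix_lt_sqrt_sum_sq_dotProduct_le {n m : ℕ} (u : Fin m → ℝ) {v : ℝ}
    (hv : 0 < v) (hu : ∑ j, u j ^ 2 ≤ v) {L : ℝ} (hL : 0 ≤ L) :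
    gaussianMatrix n m {g | L < √(∑ i, (g i ⬝ᵥ u) ^ 2)}
      ≤ ENNReal.ofReal (√2 ^ n * exp (-(L ^ 2 / (4 * v)))) := by
  have hvar : 2 * (4 * v)⁻¹ * ∑ j, u j ^ 2 ≤ 1 / 2 := by
    rw [mul_comm 2, mul_assoc, inv_mul_le_iff₀ (by positivity)]
    linarith
  calc gaussianMatrix n m {g | L < √(∑ i, (g i ⬝ᵥ u) ^ 2)}
      ≤ gaussianMatrix n m {g | L ^ 2 < ∑ i, (g i ⬝ᵥ u) ^ 2} :=
        measure_mono fun g hg => (lt_sqrt hL).1 hg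
    _ ≤ ENNReal.ofReal ((√(1 - 2 * (4 * v)⁻¹ * ∑ j, u j ^ 2))⁻¹ ^ n
          * exp (-((4 * v)⁻¹ * L ^ 2))) :=
        gaussianMatrix_lt_sum_sq_dotProduct_le u (by positivity) (by linarith) _
    _ ≤ ENNReal.ofReal (√2 ^ n * exp (-(L ^ 2 / (4 * v)))) := by
        rw [inv_mul_eq_div]
        gcongr
        rw [← inv_inv 2, sqrt_inv]
        gcongr
        linarith

def sparseIntCube (m n R : ℕ) : Finset (Fin m → ℤ) :=
  {z ∈ Fintype.piFinset fun _ => Icc (-(R : ℤ)) R | #{j | z j ≠ 0} ≤ n}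

lemma card_sparseIntCube_le {m n : ℕ} (hnm : n ≤ m) (R : ℕ) :
    #(sparseIntCube m n R) ≤ (m * (2 * R + 1)) ^ n := by
  classical
  have hcover : sparseIntCube m n R ⊆ (powersetCard n univ).biUnion fun S =>
      Fintype.piFinset fun j => if j ∈ S then Icc (-(R : ℤ)) R else {0} := by
    intro z hz
    simp only [sparseIntCube, mem_filter, Fintype.mem_piFinset] at hz
    obtain ⟨S, hsupp, -, hS⟩ :=
      exists_subsuperset_card_eq (subset_univ _) hz.2 (by simpa using hnm)
    simp only [mem_biUnion, mem_powersetCard, Fintype.mem_piFinset]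
    refine ⟨S, ⟨subset_univ _, hS⟩, fun j => ?_⟩
    split_ifs with hj
    · exact hz.1 j
    · by_contra hzj
      exact hj (hsupp (by simpa using hzj))
  have hfiber : ∀ S ∈ powersetCard n (univ : Finset (Fin m)),
      #(Fintype.piFinset fun j => if j ∈ S then Icc (-(R : ℤ)) R else {0})
        = (2 * R + 1) ^ n := by
    intro S hS
    rw [mem_powersetCard] at hS
    rw [Fintype.card_piFinset]
    simp only [apply_ite card, card_singleton, Int.card_Icc]
    rw [prod_ite_mem, univ_inter, prod_const, hS.2]
    congr 1
    omega
  calc #(sparseIntCube m n R)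
      ≤ ∑ S ∈ powersetCard n univ,
          #(Fintype.piFinset fun j => if j ∈ S then Icc (-(R : ℤ)) R else {0}) :=
        (card_le_card hcover).trans card_biUnion_le
    _ = m.choose n * (2 * R + 1) ^ n := by
        rw [sum_congr rfl hfiber, sum_const, card_powersetCard, card_univ, Fintype.card_fin,
          smul_eq_mul]
    _ ≤ (m * (2 * R + 1)) ^ n := by
        rw [mul_pow]
        gcongr
        exact Nat.choose_le_pow _ _

def sparseLatticeBall (m n : ℕ) (ε : ℝ) : Set (Fin m → ℝ) :=
  {u | (∀ j, ∃ z : ℤ, u j = ε * z) ∧ {j | u j ≠ 0}.ncard ≤ n ∧ ∑ j, u j ^ 2 ≤ 1}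

lemma sparseLatticeBall_subset_image {m n : ℕ} {ε : ℝ} (hε : 0 < ε) :
    sparseLatticeBall m n ε
      ⊆ (sparseIntCube m n ⌈ε⁻¹⌉₊).image fun z j => ε * z j := by
  rintro u ⟨hlat, hsupp, hnorm⟩
  choose z hz using hlat
  refine mem_coe.2 (mem_image.2 ⟨z, ?_, funext fun j => (hz j).symm⟩)
  have hbound : ∀ j, |(z j : ℝ)| ≤ ⌈ε⁻¹⌉₊ := by
    intro j
    have hu : |u j| ≤ 1 := by
      rw [← sq_le_one_iff_abs_le_one]
      exact (single_le_sum (fun j _ => sq_nonneg (u j)) (mem_univ j)).trans hnorm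
    rw [hz j, abs_mul, abs_of_pos hε, ← le_div_iff₀' hε, one_div] at hu
    exact hu.trans (Nat.le_ceil _)
  have hsupp_eq : {j | u j ≠ 0} = {j | z j ≠ 0} := by
    ext j
    simp [hz j, hε.ne']
  simp only [sparseIntCube, mem_filter, Fintype.mem_piFinset, mem_Icc, ← abs_le]
  refine ⟨fun j => by exact_mod_cast hbound j, ?_⟩
  rwa [hsupp_eq, Set.ncard_eq_toFinset_card', Set.toFinset_ofPred] at hsupp

lemma measure_setOf_exists_le_card_mul {Ω ι : Type*} [MeasurableSpace Ω] (μ : Measure Ω)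
    {U : Set ι} {S : Finset ι} (hUS : U ⊆ S) {P : ι → Ω → Prop} {B : ℝ≥0∞}
    (hB : ∀ u ∈ U, μ {ω | P u ω} ≤ B) :
    μ {ω | ∃ u ∈ U, P u ω} ≤ #S * B := by
  classical
  calc μ {ω | ∃ u ∈ U, P u ω} ≤ μ (⋃ u ∈ S.filter (· ∈ U), {ω | P u ω}) := by
        refine measure_mono fun ω ⟨u, hu, hP⟩ => ?_
        simp only [Set.mem_iUnion, mem_filter]
        exact ⟨u, ⟨hUS hu, hu⟩, hP⟩
    _ ≤ ∑ u ∈ S.filter (· ∈ U), μ {ω | P u ω} := measure_biUnion_finset_le _ _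
    _ ≤ #(S.filter (· ∈ U)) * B := by
        rw [← nsmul_eq_mul]
        exact sum_le_card_nsmul _ _ _ fun u hu => hB u (mem_filter.1 hu).2
    _ ≤ #S * B := by
        gcongr
        exact filter_subset _ _

lemma card_sparseIntCube_le_pow {n : ℕ} {ρ : ℝ} (hn : 3 ≤ n) (hρ : 1 ≤ ρ) :
    (#(sparseIntCube (n ^ 3) n ⌈ρ * n ^ 2⌉₊) : ℝ) ≤ ((n * ρ) ^ 8) ^ n := by
  have hn' : (3 : ℝ) ≤ n := by exact_mod_cast hn
  have hceil : (⌈ρ * n ^ 2⌉₊ : ℝ) < ρ * n ^ 2 + 1 := Nat.ceil_lt_add_one (by positivity)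
  have hρ8 : ρ ≤ ρ ^ 8 := le_self_pow₀ hρ (by norm_num)
  have hρn : 1 ≤ ρ * n ^ 2 := by nlinarith
  have hn3 : (27 : ℝ) ≤ n ^ 3 := by nlinarith
  calc (#(sparseIntCube (n ^ 3) n ⌈ρ * n ^ 2⌉₊) : ℝ)
      ≤ ((n : ℝ) ^ 3 * (2 * ⌈ρ * n ^ 2⌉₊ + 1)) ^ n := by
        exact_mod_cast card_sparseIntCube_le (Nat.le_self_pow (by norm_num) n) _
    _ ≤ ((n * ρ) ^ 8) ^ n := by
        gcongr
        calc (n : ℝ) ^ 3 * (2 * ⌈ρ * n ^ 2⌉₊ + 1)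
            ≤ n ^ 3 * (2 * (ρ * n ^ 2 + 1) + 1) := by gcongr
          _ ≤ n ^ 3 * (n ^ 3 * (ρ * n ^ 2)) := by gcongr; nlinarith
          _ ≤ (n * ρ) ^ 8 := by rw [mul_pow]; nlinarith [pow_pos (by positivity : (0:ℝ) < n) 8]

lemma pow_pow_mul_sqrt_two_pow_mul_exp_le {x : ℝ} (hx : 3 ≤ x) (n : ℕ) :
    (x ^ 8) ^ n * (√2 ^ n * exp (-(16 * n * log x))) ≤ exp (-(1 * n * log x)) := by
  have hlog : 0 ≤ log x := log_nonneg (by linarith)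
  have hsqrt : √2 ≤ exp (log x) := by
    rw [exp_log (by linarith), sqrt_le_left (by linarith)]
    nlinarith
  calc (x ^ 8) ^ n * (√2 ^ n * exp (-(16 * n * log x)))
      ≤ exp (log x) ^ (8 * n) * (exp (log x) ^ n * exp (-(16 * n * log x))) := by
        rw [exp_log (by linarith), pow_mul]
        gcongr
        rwa [← exp_log (by linarith : 0 < x)]
    _ = exp (-(7 * n * log x)) := by
        rw [← exp_nat_mul, ← exp_nat_mul, ← exp_add, ← exp_add]
        push_cast
        ring_nf
    _ ≤ exp (-(1 * n * log x)) := exp_le_exp.2 (by nlinarith [mul_nonneg n.cast_nonneg hlog])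

/-- global `U`-norm event. With `m = n³`, `ε = (ρn²)⁻¹` and
`L = C₀√((n/s)·log(nρ))`, the probability that some `u` in the discrete class `U_ε` has
`‖Γu‖₂ > L` is at most `exp(−c·n·log(nρ))`. -/
theorem global_U_norm_event :
    ∃ C₀ c : ℝ, 0 < C₀ ∧ 0 < c ∧
      ∀ (n s : ℕ) (ρ : ℝ), 3 ≤ n → 1 ≤ ρ → 1 ≤ s → s ≤ n →
      let m := n ^ 3
      let ε : ℝ := (ρ * (n : ℝ) ^ 2)⁻¹
      let L : ℝ := C₀ * Real.sqrt (((n : ℝ) / s) * Real.log (n * ρ))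
      let Uε : Set (Fin m → ℝ) :=
        {u | (∀ j, ∃ z : ℤ, u j = ε * z) ∧ {j | u j ≠ 0}.ncard ≤ n ∧ ∑ j, u j ^ 2 ≤ 1 / (s : ℝ)}
      gaussianMatrix n m {g | ∃ u ∈ Uε, L < Real.sqrt (∑ i, ((Matrix.of g).mulVec u i) ^ 2)} ≤
        ENNReal.ofReal (Real.exp (-(c * n * Real.log (n * ρ)))) := by
  refine ⟨8, 1, by norm_num, by norm_num, fun n s ρ hn hρ hs _ => ?_⟩
  intro m ε L Uε
  have hs0 : (0 : ℝ) < s := by exact_mod_cast hs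
  have hnρ : (3 : ℝ) ≤ n * ρ :=
    (by exact_mod_cast hn : (3 : ℝ) ≤ n).trans (le_mul_of_one_le_right (by positivity) hρ)
  have hε : 0 < ε := by positivity
  have hball : Uε ⊆ sparseLatticeBall m n ε := fun u hu =>
    ⟨hu.1, hu.2.1, hu.2.2.trans (div_le_one_of_le₀ (by exact_mod_cast hs) hs0.le)⟩
  have hL : L ^ 2 / (4 * (1 / s)) = 16 * n * log (n * ρ) := by
    rw [mul_pow, sq_sqrt (mul_nonneg (by positivity) (log_nonneg (by linarith)))]
    field_simp
    ring
  have htail : ∀ u ∈ Uε, gaussianMatrix n m {g | L < √(∑ i, (of g *ᵥ u) i ^ 2)}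
      ≤ ENNReal.ofReal (√2 ^ n * exp (-(16 * n * log (n * ρ)))) := fun u hu =>
    hL ▸ gaussianMatrix_lt_sqrt_sum_sq_dotProduct_le u (by positivity) hu.2.2 (by positivity)
  have hcard : (#((sparseIntCube m n ⌈ε⁻¹⌉₊).image fun z j => ε * z j) : ℝ)
      ≤ ((n * ρ) ^ 8) ^ n :=
    (Nat.cast_le.2 card_image_le).trans (inv_inv (ρ * n ^ 2) ▸ card_sparseIntCube_le_pow hn hρ)
  calc _ ≤ _ := measure_setOf_exists_le_card_mul _
        (hball.trans (sparseLatticeBall_subset_image hε)) htail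
    _ ≤ ENNReal.ofReal (((n * ρ) ^ 8) ^ n * (√2 ^ n * exp (-(16 * n * log (n * ρ))))) := by
        rw [ENNReal.ofReal_mul (p := ((n * ρ) ^ 8) ^ n) (by positivity),
          ← ENNReal.ofReal_natCast]
        gcongr
    _ ≤ _ := ENNReal.ofReal_le_ofReal (pow_pow_mul_sqrt_two_pow_mul_exp_le hnρ n)
end
end

section
/- Let n ≥ 1 and let 1 ≤ p ≤ n be integers with q := n − p. Let y₁,…,y_p, z₁,…,z_q ∈ ℝⁿ be linearly independent and set P := conv{±y₁,…,±y_p, ±z₁,…,±z_q}. Fix an integer 1 ≤ r ≤ p, and for each J ⊆ [p] with |J| = r define the suppressed polytope P_J := conv( {±yᵢ : i ∈ [p]∖J} ∪ {±(r/p)·yᵢ : i ∈ J} ∪ {±z₁,…,±z_q} ). Then for every t > 0: γ_n(t·P) ≤ (2 / binom(p,r)) · Σ_{J ⊆ [p], |J| = r} γ_n(4t·P_J). -/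
open MeasureTheory ProbabilityTheory
open scoped ENNReal NNReal Pointwise

noncomputable section

/-- Standard Gaussian measure on `EuclideanSpace ℝ (Fin d)`. -/
def stdGaussian (d : ℕ) : Measure (EuclideanSpace ℝ (Fin d)) :=
  (Measure.pi fun _ : Fin d => gaussianReal 0 1).map
    (MeasurableEquiv.toLp 2 (Fin d → ℝ))

/-!
A point `t • ∑ cᵢ vᵢ` of `t • P` lies in `4t • P_J` as soon as the `y`-coefficients indexed by
`J` carry at most a `2r/p` fraction of the total `y`-mass, since rescaling them by `p/r` then
adds at most twice that mass. A random `r`-set carries on average an `r/p` fraction, so by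
Markov's inequality at least half of the `r`-sets are good for every point. Integrating the
number of good `J` against the measure and applying Markov's inequality once more gives the
bound.
-/

namespace Finset

theorem sum_powersetCard_sum {α M : Type*} [DecidableEq α] [AddCommMonoid M] (s : Finset α)
    {r : ℕ} (hr : 1 ≤ r) (f : α → M) :
    ∑ J ∈ s.powersetCard r, ∑ i ∈ J, f i = (#s - 1).choose (r - 1) • ∑ i ∈ s, f i := by
  calc ∑ J ∈ s.powersetCard r, ∑ i ∈ J, f i
      = ∑ J ∈ s.powersetCard r, ∑ i ∈ s, if i ∈ J then f i else 0 :=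
        sum_congr rfl fun J hJ => by
          rw [sum_ite_mem, inter_eq_right.2 (mem_powersetCard.1 hJ).1]
    _ = ∑ i ∈ s, #{J ∈ s.powersetCard r | {i} ⊆ J} • f i := by
        rw [sum_comm]
        refine sum_congr rfl fun i _ => ?_
        simp only [singleton_subset_iff]
        rw [← sum_filter, sum_const]
    _ = _ := by
        rw [smul_sum]
        refine sum_congr rfl fun i hi => ?_
        rw [card_filter_powersetCard_subset _ _ _ (singleton_subset_iff.2 hi) (by simpa using hr),
          card_singleton]

end Finset

open Finset

theorem Nat.mul_choose_sub_one {n k : ℕ} (hk : 1 ≤ k) :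
    n * (n - 1).choose (k - 1) = k * n.choose k := by
  rcases n with _ | n
  · simp [Nat.choose_eq_zero_of_lt hk]
  obtain ⟨k, rfl⟩ := Nat.exists_eq_add_of_le' hk
  rw [Nat.add_sub_cancel, Nat.add_sub_cancel, Nat.add_one_mul_choose_eq, Nat.mul_comm]

theorem choose_le_two_mul_card_filter_sum_le {ι : Type*} [DecidableEq ι] (s : Finset ι) {r : ℕ}
    (hr : 1 ≤ r) (w : ι → ℝ) (hw : ∀ i ∈ s, 0 ≤ w i) :
    (#s).choose r ≤ 2 * #{J ∈ s.powersetCard r | ∑ i ∈ J, w i ≤ 2 * (r / #s) * ∑ i ∈ s, w i} := by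
  have hsplit := card_filter_add_card_filter_not (s := s.powersetCard r)
    (fun J => ∑ i ∈ J, w i ≤ 2 * (r / #s) * ∑ i ∈ s, w i)
  rw [card_powersetCard] at hsplit
  set bad := {J ∈ s.powersetCard r | ¬ ∑ i ∈ J, w i ≤ 2 * (r / #s) * ∑ i ∈ s, w i}
  suffices 2 * #bad ≤ (#s).choose r by omega
  have hJs : ∀ J ∈ s.powersetCard r, ∑ i ∈ J, w i ≤ ∑ i ∈ s, w i := fun J hJ =>
    sum_le_sum_of_subset_of_nonneg (mem_powersetCard.1 hJ).1 fun i hi _ => hw i hi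
  rcases (sum_nonneg hw).eq_or_lt with hS | hS
  · have : bad = ∅ := filter_false_of_mem fun J hJ => by
      rw [not_not, ← hS, mul_zero, hS]
      exact hJs J hJ
    simp [this]
  obtain ⟨i, hi, -⟩ := exists_ne_zero_of_sum_ne_zero hS.ne'
  have hp : (0 : ℝ) < #s := by exact_mod_cast card_pos.2 ⟨i, hi⟩
  have hmarkov : (#bad : ℝ) * (2 * (r / #s) * ∑ i ∈ s, w i)
      ≤ (#s - 1).choose (r - 1) * ∑ i ∈ s, w i := by
    rw [← nsmul_eq_mul, ← nsmul_eq_mul, ← sum_powersetCard_sum _ hr]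
    refine (card_nsmul_le_sum _ _ _ fun J hJ => (not_le.1 (mem_filter.1 hJ).2).le).trans ?_
    exact sum_le_sum_of_subset_of_nonneg (filter_subset _ _) fun J hJ _ =>
      sum_nonneg fun i hi => hw i ((mem_powersetCard.1 hJ).1 hi)
  have hchoose : (#s : ℝ) * (#s - 1).choose (r - 1) = r * (#s).choose r := by
    exact_mod_cast Nat.mul_choose_sub_one hr
  have hrS : (0 : ℝ) < r * ∑ i ∈ s, w i := by positivity
  have hscaled : (2 * #bad : ℝ) * (r * ∑ i ∈ s, w i) ≤ (#s).choose r * (r * ∑ i ∈ s, w i) := by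
    calc (2 * #bad : ℝ) * (r * ∑ i ∈ s, w i)
        = #s * (#bad * (2 * (r / #s) * ∑ i ∈ s, w i)) := by field_simp
      _ ≤ #s * ((#s - 1).choose (r - 1) * ∑ i ∈ s, w i) := by gcongr
      _ = (#s).choose r * (r * ∑ i ∈ s, w i) := by rw [← mul_assoc, hchoose]; ring
  exact_mod_cast le_of_mul_le_mul_right hscaled hrS

open scoped Classical in
theorem MeasureTheory.mul_measure_le_sum_measure_of_le_card {α ι : Type*} [MeasurableSpace α]
    (μ : Measure α) (s : Finset ι) (T : ι → Set α) {S : Set α} {k : ℝ≥0∞}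
    (h : ∀ x ∈ S, k ≤ #{i ∈ s | x ∈ T i}) :
    k * μ S ≤ ∑ i ∈ s, μ (T i) := by
  set g : α → ℝ≥0∞ := fun x => ∑ i ∈ s, (toMeasurable μ (T i)).indicator 1 x
  have hg : Measurable g := Finset.measurable_sum _ fun i _ =>
    measurable_one.indicator (measurableSet_toMeasurable _ _)
  have hSg : S ⊆ {x | k ≤ g x} := fun x hx => by
    refine (h x hx).trans ?_
    rw [card_eq_sum_ones, Nat.cast_sum, sum_filter]
    simp only [g]
    gcongr with i
    split_ifs with hxi
    · simp [subset_toMeasurable μ _ hxi]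
    · simp
  calc k * μ S ≤ k * μ {x | k ≤ g x} := by gcongr
    _ ≤ ∫⁻ x, g x ∂μ := mul_meas_ge_le_lintegral hg k
    _ = ∑ i ∈ s, μ (T i) := by
      simp only [g]
      rw [lintegral_finsetSum _ fun i _ =>
        measurable_one.indicator (measurableSet_toMeasurable _ _)]
      simp [lintegral_indicator_one (measurableSet_toMeasurable _ _), measure_toMeasurable]

theorem sum_smul_mem_smul_absConv {ι V : Type*} [AddCommGroup V] [Module ℝ V] {s : Finset ι}
    {b : ι → ℝ} {C : ℝ} (hb : ∑ i ∈ s, |b i| ≤ C) (x : ι → V) :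
    ∑ i ∈ s, b i • x i ∈ C • absConv s x := by
  refine ⟨∑ i ∈ s, (C⁻¹ * b i) • x i, ⟨fun i => C⁻¹ * b i, ?_, rfl⟩, ?_⟩
  · have hC : 0 ≤ C := (sum_nonneg fun i _ => abs_nonneg _).trans hb
    simp only [abs_mul, abs_inv, abs_of_nonneg hC, ← mul_sum]
    exact inv_mul_le_one_of_le₀ hb hC
  · change C • _ = _
    rw [smul_sum]
    refine sum_congr rfl fun i hi => ?_
    rw [smul_smul, ← mul_assoc]
    rcases eq_or_ne C 0 with rfl | hC
    · have : |b i| ≤ 0 := (single_le_sum (fun j _ => abs_nonneg (b j)) hi).trans hb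
      simp [abs_nonpos_iff.1 this]
    · rw [mul_inv_cancel₀ hC, one_mul]

theorem smul_sum_mem_smul_absConv_suppress {ι κ V : Type*} [Fintype ι] [DecidableEq ι]
    [Fintype κ] [AddCommGroup V] [Module ℝ V] (y : ι → V) (z : κ → V) (c : ι ⊕ κ → ℝ)
    (hc : ∑ i, |c i| ≤ 1) {J : Finset ι} {a : ℝ} (ha : 0 < a)
    (hJ : ∑ i ∈ J, |c (.inl i)| ≤ 2 * a * ∑ i, |c (.inl i)|) {t : ℝ} (ht : 0 ≤ t) :
    t • ∑ i, c i • Sum.elim y z i ∈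
      (4 * t) • absConv univ (Sum.elim (fun i => if i ∈ J then a • y i else y i) z) := by
  set b : ι ⊕ κ → ℝ := Sum.elim (fun i => if i ∈ J then t * a⁻¹ * c (.inl i) else t * c (.inl i))
    (fun j => t * c (.inr j))
  have hb_sum : t • ∑ i, c i • Sum.elim y z i =
      ∑ i, b i • Sum.elim (fun i => if i ∈ J then a • y i else y i) z i := by
    simp only [Fintype.sum_sum_type, smul_add, smul_sum, Sum.elim_inl, Sum.elim_inr, b]
    congr 1
    · refine sum_congr rfl fun i _ => ?_
      split_ifs
      · rw [smul_smul, smul_smul]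
        field_simp
      · rw [smul_smul]
    · simp only [smul_smul]
  have hb_inl : ∀ i,
      |b (.inl i)| ≤ t * (a⁻¹ * (if i ∈ J then |c (.inl i)| else 0) + |c (.inl i)|) := by
    intro i
    simp only [b, Sum.elim_inl]
    split_ifs
    · rw [abs_mul, abs_mul, abs_of_nonneg ht, abs_of_pos (inv_pos.2 ha)]
      nlinarith [abs_nonneg (c (.inl i))]
    · rw [abs_mul, abs_of_nonneg ht]
      simp
  have hJ' : a⁻¹ * ∑ i ∈ J, |c (.inl i)| ≤ 2 * ∑ i, |c (.inl i)| := by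
    rw [inv_mul_le_iff₀ ha]; linarith
  have hb : ∑ i, |b i| ≤ 4 * t := by
    rw [Fintype.sum_sum_type] at hc ⊢
    calc ∑ i, |b (.inl i)| + ∑ j, |b (.inr j)|
        ≤ t * (a⁻¹ * ∑ i ∈ J, |c (.inl i)| + ∑ i, |c (.inl i)|) + t * ∑ j, |c (.inr j)| := by
          gcongr
          · refine (sum_le_sum fun i _ => hb_inl i).trans_eq ?_
            rw [← mul_sum, sum_add_distrib, ← mul_sum, sum_ite_mem, univ_inter]
          · simp [b, abs_mul, abs_of_nonneg ht, mul_sum]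
      _ ≤ t * 4 := by
          rw [← mul_add]
          gcongr
          have := sum_nonneg fun i (_ : i ∈ univ) => abs_nonneg (c (.inl i))
          have := sum_nonneg fun j (_ : j ∈ univ) => abs_nonneg (c (.inr j))
          linarith
      _ = 4 * t := mul_comm _ _
  exact hb_sum ▸ sum_smul_mem_smul_absConv hb _

theorem random_suppression_general (n p q : ℕ)
    (y : Fin p → EuclideanSpace ℝ (Fin n)) (z : Fin q → EuclideanSpace ℝ (Fin n))
    (r : ℕ) (hr1 : 1 ≤ r) (hrp : r ≤ p) (t : ℝ) (ht : 0 < t) :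
    stdGaussian n (t • absConv Finset.univ (Sum.elim y z)) ≤
      (2 / (p.choose r : ℝ≥0∞)) *
        ∑ J ∈ Finset.powersetCard r (Finset.univ : Finset (Fin p)),
          stdGaussian n ((4 * t) •
            absConv Finset.univ
              (Sum.elim (fun i => if i ∈ J then ((r : ℝ) / (p : ℝ)) • y i else y i) z)) := by
  classical
  have hratio : (0 : ℝ) < r / p := by
    have : 0 < p := hr1.trans hrp
    positivity
  have hcover : ∀ x ∈ t • absConv univ (Sum.elim y z), (p.choose r : ℝ≥0∞) / 2 ≤
      #{J ∈ powersetCard r (univ : Finset (Fin p)) | x ∈ (4 * t) • absConv univ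
        (Sum.elim (fun i => if i ∈ J then ((r : ℝ) / (p : ℝ)) • y i else y i) z)} := by
    rintro _ ⟨_, ⟨c, hc, rfl⟩, rfl⟩
    have hgood := choose_le_two_mul_card_filter_sum_le univ hr1 (fun i => |c (.inl i)|)
      fun i _ => abs_nonneg _
    rw [card_univ, Fintype.card_fin] at hgood
    rw [ENNReal.div_le_iff two_ne_zero ENNReal.ofNat_ne_top, mul_comm]
    refine (Nat.cast_le.2 hgood).trans ?_
    push_cast
    gcongr 2 * (#?_ : ℝ≥0∞)
    exact monotone_filter_right _ fun J _ hJ => smul_sum_mem_smul_absConv_suppress y z c hc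
      hratio hJ ht.le
  have hchoose : (p.choose r : ℝ≥0∞) ≠ 0 := by exact_mod_cast (Nat.choose_pos hrp).ne'
  calc stdGaussian n (t • absConv univ (Sum.elim y z))
      = 2 / p.choose r * (p.choose r / 2 * stdGaussian n (t • absConv univ (Sum.elim y z))) := by
        rw [← mul_assoc, ← ENNReal.inv_div (by simp) (by simp), ENNReal.inv_mul_cancel
          (by simp [hchoose]) (ENNReal.div_ne_top (by simp) (by simp)), one_mul]
    _ ≤ _ := by
        gcongr
        exact mul_measure_le_sum_measure_of_le_card _ _ _ hcover

/-- random suppression: the Gaussian measure of `t·P` is at most twice the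
average, over subsets `J ⊆ [p]` with `|J| = r`, of the Gaussian measures of the suppressed
polytopes `4t·P_J`. -/
theorem random_suppression (n p q : ℕ) (hp : 1 ≤ p) (hpq : p + q = n)
    (y : Fin p → EuclideanSpace ℝ (Fin n)) (z : Fin q → EuclideanSpace ℝ (Fin n))
    (hLI : LinearIndependent ℝ (Sum.elim y z))
    (r : ℕ) (hr1 : 1 ≤ r) (hrp : r ≤ p) (t : ℝ) (ht : 0 < t) :
    stdGaussian n (t • absConv Finset.univ (Sum.elim y z)) ≤
      (2 / (p.choose r : ℝ≥0∞)) *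
        ∑ J ∈ Finset.powersetCard r (Finset.univ : Finset (Fin p)),
          stdGaussian n ((4 * t) •
            absConv Finset.univ
              (Sum.elim (fun i => if i ∈ J then ((r : ℝ) / (p : ℝ)) • y i else y i) z)) :=
  random_suppression_general n p q y z r hr1 hrp t ht

end
end

section
/- Let H be a real Hilbert space and let x₁,…,xₙ ∈ H satisfy ‖xᵢ‖ ≤ L for all i. Fix integers 1 ≤ t ≤ k ≤ n and set r₀ := L/√t. For each I ⊆ [n] define Q_I := conv{±xᵢ : i ∈ I}. Then ⋃_{I ⊆ [n], |I| = k} Q_I ⊆ ⋃_{S ⊆ [n], |S| = t} ( Q_S + r₀·B_H ), where B_H is the closed unit ball of H and + denotes Minkowski sum. -/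
open scoped Pointwise

noncomputable section

/-!
Every point of `Q_I` lies in the convex hull of the segments `[-xᵢ, xᵢ]`, `i ∈ I`, all contained
in the ball of radius `L`. Maurey's empirical method then chooses points `a₁, …, a_t` on these
segments one at a time: if `D = m • y - (a₁ + ⋯ + a_m)`, some point `z` of the segments has
`⟪D + y, z⟫ ≥ ⟪D + y, y⟫` because `y` is in their convex hull, and expanding the square gives
`‖D + (y - z)‖² ≤ ‖D‖² - ‖y‖² + ‖z‖² ≤ ‖D‖² + L²`. Hence `‖t • y - ∑ aⱼ‖² ≤ t L²`, so `y` is within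
`L / √t` of the average of the `aⱼ`, which lies in `Q_S` for any `S` containing the at most `t`
indices involved.
-/

open Finset Metric

theorem AbsConvex.sum_smul_mem {ι E : Type*} [AddCommGroup E] [Module ℝ E] {K : Set E}
    (hK : AbsConvex ℝ K) (h0 : (0 : E) ∈ K) {s : Finset ι} {z : ι → E}
    (hz : ∀ i ∈ s, z i ∈ K) {a : ι → ℝ} (ha : ∑ i ∈ s, |a i| ≤ 1) :
    ∑ i ∈ s, a i • z i ∈ K := by
  have hsign : ∀ r : ℝ, ‖((SignType.sign r : SignType) : ℝ)‖ ≤ 1 := fun r => by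
    rcases lt_trichotomy r 0 with h | h | h <;> simp [h]
  -- `∑ a i • z i` is the convex combination of the points `sign (a i) • z i` and `0`
  -- with weights `|a i|` and `1 - ∑ |a i|`
  have hcomb := hK.2.sum_mem (t := insertNone s)
    (w := fun o => o.elim (1 - ∑ i ∈ s, |a i|) fun i => |a i|)
    (z := fun o => o.elim 0 fun i => (SignType.sign (a i) : ℝ) • z i)
    (by simpa [Option.forall] using ha) (by simp)
    (by simpa [Option.forall, h0] using fun i hi => hK.1.smul_mem (hsign _) (hz i hi))
  simpa [smul_smul] using hcomb

theorem balancedHull_image_subset_iUnion {𝕜 ι E : Type*} [SeminormedRing 𝕜] [AddCommGroup E]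
    [Module 𝕜 E] (f : ι → E) (s : Set ι) :
    balancedHull 𝕜 (f '' s) ⊆ ⋃ i ∈ s, balancedHull 𝕜 {f i} := by
  intro z hz
  obtain ⟨r, hr, _, ⟨i, hi, rfl⟩, rfl⟩ := mem_balancedHull_iff.1 hz
  exact Set.mem_iUnion₂.2 ⟨i, hi, mem_balancedHull_iff.2 ⟨r, hr, Set.smul_mem_smul_set rfl⟩⟩

section absConv

variable {ι V : Type*} [AddCommGroup V] [Module ℝ V] {s : Finset ι} {x : ι → V}

theorem absConvex_absConv : AbsConvex ℝ (absConv s x) := by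
  constructor
  · refine balanced_iff_smul_mem.2 fun r hr _ ⟨a, ha, hy⟩ => ⟨fun i => r * a i, ?_, ?_⟩
    · simp only [abs_mul, ← mul_sum]
      exact mul_le_one₀ hr (sum_nonneg fun i _ => abs_nonneg _) ha
    · simp [hy, smul_sum, mul_smul]
  · rintro _ ⟨a, ha, rfl⟩ _ ⟨b, hb, rfl⟩ α β hα hβ hαβ
    refine ⟨fun i => α * a i + β * b i, ?_, ?_⟩
    · calc ∑ i ∈ s, |α * a i + β * b i| ≤ ∑ i ∈ s, (α * |a i| + β * |b i|) :=
            sum_le_sum fun i _ => (abs_add_le _ _).trans_eq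
              (by rw [abs_mul, abs_mul, abs_of_nonneg hα, abs_of_nonneg hβ])
        _ = α * ∑ i ∈ s, |a i| + β * ∑ i ∈ s, |b i| := by rw [sum_add_distrib, mul_sum, mul_sum]
        _ ≤ α * 1 + β * 1 := by gcongr
        _ = 1 := by rw [mul_one, mul_one, hαβ]
    · simp [smul_sum, add_smul, mul_smul, sum_add_distrib]

theorem image_subset_absConv : x '' s ⊆ absConv s x := by
  classical
  rintro _ ⟨i, hi, rfl⟩
  rw [mem_coe] at hi
  exact ⟨Pi.single i 1, by simp [Pi.single_apply, apply_ite, hi], by simp [Pi.single_apply, hi]⟩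

theorem absConv_eq_absConvexHull (hs : s.Nonempty) : absConv s x = absConvexHull ℝ (x '' s) := by
  refine subset_antisymm ?_ (absConvexHull_min image_subset_absConv absConvex_absConv)
  rintro _ ⟨a, ha, rfl⟩
  exact absConvex_absConvexHull.sum_smul_mem
    (balanced_absConvexHull.zero_mem (((coe_nonempty.2 hs).image x).mono subset_absConvexHull))
    (fun i hi => subset_absConvexHull ⟨i, hi, rfl⟩) ha

end absConv

section Maurey

variable {E : Type*} [NormedAddCommGroup E] [InnerProductSpace ℝ E] {A : Set E} {L : ℝ} {y : E}

theorem exists_mem_norm_add_sub_sq_le (hA : A ⊆ closedBall 0 L) (hy : y ∈ convexHull ℝ A)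
    (u : E) : ∃ z ∈ A, ‖u + (y - z)‖ ^ 2 ≤ ‖u‖ ^ 2 + L ^ 2 := by
  obtain ⟨z, hzA, hz⟩ := ((innerₛₗ ℝ (u + y)).convexOn convex_univ).exists_ge_of_mem_convexHull
    (Set.subset_univ A) hy
  refine ⟨z, hzA, ?_⟩
  have hzL : ‖z‖ ≤ L := mem_closedBall_zero_iff.1 (hA hzA)
  simp only [coe_innerₛₗ_apply, inner_add_left, real_inner_self_eq_norm_sq] at hz
  have hz2 : ‖z‖ ^ 2 ≤ L ^ 2 := pow_le_pow_left₀ (norm_nonneg z) hzL 2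
  rw [← add_sub_assoc, norm_sub_sq_real, norm_add_sq_real, inner_add_left]
  nlinarith [sq_nonneg ‖y‖]

theorem exists_norm_natCast_smul_sub_sum_sq_le (hA : A ⊆ closedBall 0 L) (hy : y ∈ convexHull ℝ A)
    (m : ℕ) : ∃ a : Fin m → E, (∀ j, a j ∈ A) ∧ ‖(m : ℝ) • y - ∑ j, a j‖ ^ 2 ≤ m * L ^ 2 := by
  induction m with
  | zero => exact ⟨Fin.elim0, fun j => j.elim0, by simp⟩
  | succ m ih =>
    obtain ⟨a, haA, ha⟩ := ih
    obtain ⟨z, hzA, hz⟩ := exists_mem_norm_add_sub_sq_le hA hy ((m : ℝ) • y - ∑ j, a j)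
    refine ⟨Fin.cons z a, Fin.forall_fin_succ.2 ⟨hzA, haA⟩, ?_⟩
    have hsplit : ((m + 1 : ℕ) : ℝ) • y - (z + ∑ j, a j) = ((m : ℝ) • y - ∑ j, a j) + (y - z) := by
      push_cast
      rw [add_smul, one_smul]
      abel
    rw [Fin.sum_cons, hsplit]
    push_cast
    linarith

theorem exists_norm_sub_inv_smul_sum_le (hA : A ⊆ closedBall 0 L) (hy : y ∈ convexHull ℝ A)
    {m : ℕ} (hm : m ≠ 0) :
    ∃ a : Fin m → E, (∀ j, a j ∈ A) ∧ ‖y - (m : ℝ)⁻¹ • ∑ j, a j‖ ≤ L / √m := by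
  obtain ⟨a, haA, ha⟩ := exists_norm_natCast_smul_sub_sum_sq_le hA hy m
  refine ⟨a, haA, ?_⟩
  have hL : 0 ≤ L := nonempty_closedBall.1 ((convexHull_nonempty_iff.1 ⟨y, hy⟩).mono hA)
  have hm₀ : (0 : ℝ) < m := by positivity
  have hnorm : ‖(m : ℝ) • y - ∑ j, a j‖ ≤ √m * L := by
    rw [← pow_le_pow_iff_left₀ (norm_nonneg _) (by positivity) two_ne_zero, mul_pow,
      Real.sq_sqrt hm₀.le]
    exact ha
  calc ‖y - (m : ℝ)⁻¹ • ∑ j, a j‖ = (m : ℝ)⁻¹ * ‖(m : ℝ) • y - ∑ j, a j‖ := by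
        rw [← norm_smul_of_nonneg (inv_nonneg.2 hm₀.le), smul_sub, inv_smul_smul₀ hm₀.ne']
    _ ≤ (m : ℝ)⁻¹ * (√m * L) := by gcongr
    _ = L / √m := by
        field_simp
        rw [Real.sq_sqrt hm₀.le]

end Maurey

theorem maurey_union_inclusion_general {H : Type*} [NormedAddCommGroup H] [InnerProductSpace ℝ H]
    (n : ℕ) (x : Fin n → H) (L : ℝ) (hx : ∀ i, ‖x i‖ ≤ L)
    (t k : ℕ) (ht : 1 ≤ t) (htk : t ≤ k) (hkn : k ≤ n) :
    (⋃ (I : Finset (Fin n)) (_ : I.card = k), absConv I x) ⊆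
      ⋃ (S : Finset (Fin n)) (_ : S.card = t),
        (absConv S x + (L / Real.sqrt t) • Metric.closedBall (0 : H) 1) := by
  simp only [Set.iUnion_subset_iff]
  intro I hI y hy
  have hA : balancedHull ℝ (x '' I) ⊆ closedBall 0 L :=
    balanced_closedBall_zero.balancedHull_subset_of_subset
      (by rintro _ ⟨i, -, rfl⟩; exact mem_closedBall_zero_iff.2 (hx i))
  rw [absConv_eq_absConvexHull (card_pos.1 (by omega)),
    absConvexHull_eq_convexHull_balancedHull] at hy
  obtain ⟨a, haA, hya⟩ := exists_norm_sub_inv_smul_sum_le hA hy (by omega : t ≠ 0)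
  choose i _ hi using fun j => Set.mem_iUnion₂.1 (balancedHull_image_subset_iUnion x _ (haA j))
  obtain ⟨S, hiS, -, hS⟩ := exists_subsuperset_card_eq (n := t) (subset_univ (univ.image i))
    (card_image_le.trans_eq (by simp)) (by simpa using htk.trans hkn)
  have haS : ∀ j, a j ∈ absConv S x := fun j =>
    absConvex_absConv.1.balancedHull_subset_of_subset image_subset_absConv
      (balancedHull_mono (Set.singleton_subset_iff.2 (Set.mem_image_of_mem x
        (mem_coe.2 (hiS (mem_image_of_mem i (mem_univ j)))))) (hi j))
  have havg : (t : ℝ)⁻¹ • ∑ j, a j ∈ absConv S x := by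
    rw [smul_sum]
    exact absConvex_absConv.2.sum_mem (fun _ _ => by positivity) (by simp [show t ≠ 0 by omega])
      fun j _ => haS j
  refine Set.mem_iUnion₂.2 ⟨S, hS, ?_⟩
  rw [smul_unitClosedBall]
  exact ⟨_, havg, _, mem_closedBall_zero_iff.2 (hya.trans (Real.le_norm_self _)),
    add_sub_cancel _ _⟩

/-- union inclusion after Maurey sparsification. -/
theorem maurey_union_inclusion {H : Type*} [NormedAddCommGroup H] [InnerProductSpace ℝ H]
    [CompleteSpace H] (n : ℕ) (x : Fin n → H) (L : ℝ) (hx : ∀ i, ‖x i‖ ≤ L)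
    (t k : ℕ) (ht : 1 ≤ t) (htk : t ≤ k) (hkn : k ≤ n) :
    (⋃ (I : Finset (Fin n)) (_ : I.card = k), absConv I x) ⊆
      ⋃ (S : Finset (Fin n)) (_ : S.card = t),
        (absConv S x + (L / Real.sqrt t) • Metric.closedBall (0 : H) 1) :=
  maurey_union_inclusion_general n x L hx t k ht htk hkn

end
end

section
/- Let H ⊆ ℝⁿ be a linear subspace with dim(H) ≥ k, and let Q ⊆ H be a compact set with dim(span(Q)) ≤ k. Then there exists a k-dimensional linear subspace H̃ with span(Q) ⊆ H̃ ⊆ H such that for every η ≥ 0: γ_H( Q + η·B₂^H ) ≤ γ_{H̃}( Q + η·B₂^{H̃} ). Here, for a subspace E ⊆ ℝⁿ, γ_E denotes the law of π_E(G) for G a standard Gaussian vector in ℝⁿ (π_E the orthogonal projection onto E), B₂^E := {h ∈ E : ‖h‖₂ ≤ 1}, and + denotes Minkowski sum. -/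
open MeasureTheory ProbabilityTheory
open scoped ENNReal NNReal Pointwise

noncomputable section

/-- For a subspace `E ⊆ ℝⁿ`, the law of the orthogonal projection onto `E` of a standard
Gaussian vector, regarded as a measure on the ambient space. -/
def gammaSub {n : ℕ} (E : Submodule ℝ (EuclideanSpace ℝ (Fin n))) :
    Measure (EuclideanSpace ℝ (Fin n)) :=
  (stdGaussian n).map fun x => ((E.orthogonalProjectionOnto x : E) : EuclideanSpace ℝ (Fin n))

/-- The closed unit ball of the subspace `E`, as a subset of the ambient space. -/
def subBall {n : ℕ} (E : Submodule ℝ (EuclideanSpace ℝ (Fin n))) :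
    Set (EuclideanSpace ℝ (Fin n)) :=
  {h | h ∈ E ∧ ‖h‖ ≤ 1}

/-! Any `k`-dimensional `Ht` with `span Q ≤ Ht ≤ H` works. Since `Ht ≤ H`, the projection onto `Ht`
factors through the projection onto `H`, so `γ_Ht` is the pushforward of `γ_H` under `π_Ht`; and
`π_Ht` fixes `Q` and maps the unit ball of `H` into that of `Ht`, hence maps `Q + η • B^H` into
`Q + η • B^Ht`. -/

open Module Set Submodule

theorem Submodule.exists_le_le_finrank_eq {K V : Type*} [DivisionRing K] [AddCommGroup V]
    [Module K V] [FiniteDimensional K V] {N P : Submodule K V} (hNP : N ≤ P) {k : ℕ}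
    (hNk : finrank K N ≤ k) (hkP : k ≤ finrank K P) :
    ∃ W : Submodule K V, N ≤ W ∧ W ≤ P ∧ finrank K W = k := by
  induction k, hNk using Nat.le_induction with
  | base => exact ⟨N, le_rfl, hNP, rfl⟩
  | succ k _ ih =>
    obtain ⟨W, hNW, hWP, rfl⟩ := ih (by omega)
    obtain ⟨v, hvP, hvW⟩ :=
      SetLike.exists_of_lt (lt_of_le_of_finrank_lt_finrank hWP (by omega))
    exact ⟨W ⊔ span K {v}, le_sup_of_le_left hNW, sup_le hWP (span_le.mpr (by simpa)),
      finrank_sup_span_singleton hvW⟩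

section

variable {n : ℕ} {E H W : Submodule ℝ (EuclideanSpace ℝ (Fin n))}

lemma gammaSub_eq_map (E : Submodule ℝ (EuclideanSpace ℝ (Fin n))) :
    gammaSub E = (stdGaussian n).map E.starProjection :=
  rfl

lemma map_starProjection_gammaSub (hWH : W ≤ H) :
    (gammaSub H).map W.starProjection = gammaSub W := by
  rw [gammaSub_eq_map, gammaSub_eq_map, Measure.map_map W.starProjection.continuous.measurable
    H.starProjection.continuous.measurable, ← ContinuousLinearMap.coe_comp,
    starProjection_comp_starProjection_of_le hWH]

lemma gammaSub_le_of_mapsTo (hWH : W ≤ H) {A B : Set (EuclideanSpace ℝ (Fin n))}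
    (hAB : MapsTo W.starProjection A B) : gammaSub H A ≤ gammaSub W B :=
  calc gammaSub H A ≤ gammaSub H (W.starProjection ⁻¹' B) := measure_mono hAB
    _ ≤ (gammaSub H).map W.starProjection B :=
      Measure.le_map_apply W.starProjection.continuous.aemeasurable B
    _ = gammaSub W B := by rw [map_starProjection_gammaSub hWH]

lemma mapsTo_starProjection_subBall (W E : Submodule ℝ (EuclideanSpace ℝ (Fin n))) :
    MapsTo W.starProjection (subBall E) (subBall W) :=
  fun x hx => ⟨W.starProjection_apply_mem x, (W.norm_starProjection_apply_le x).trans hx.2⟩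

lemma mapsTo_starProjection_add_smul_subBall {Q : Set (EuclideanSpace ℝ (Fin n))}
    (hQW : Q ⊆ W) (η : ℝ) (E : Submodule ℝ (EuclideanSpace ℝ (Fin n))) :
    MapsTo W.starProjection (Q + η • subBall E) (Q + η • subBall W) := by
  rintro _ ⟨q, hq, _, ⟨b, hb, rfl⟩, rfl⟩
  refine ⟨q, hq, η • W.starProjection b, ⟨_, mapsTo_starProjection_subBall W E hb, rfl⟩, ?_⟩
  rw [map_add, map_smul, W.starProjection_eq_self_iff.mpr (hQW hq)]

end

theorem dimension_reduction_general (n k : ℕ) (H : Submodule ℝ (EuclideanSpace ℝ (Fin n)))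
    (hH : k ≤ Module.finrank ℝ H) (Q : Set (EuclideanSpace ℝ (Fin n)))
    (hQH : Q ⊆ (H : Set (EuclideanSpace ℝ (Fin n))))
    (hspan : Module.finrank ℝ (Submodule.span ℝ Q) ≤ k) :
    ∃ Ht : Submodule ℝ (EuclideanSpace ℝ (Fin n)),
      Module.finrank ℝ Ht = k ∧ Submodule.span ℝ Q ≤ Ht ∧ Ht ≤ H ∧
      ∀ η : ℝ, 0 ≤ η →
        gammaSub H (Q + η • subBall H) ≤ gammaSub Ht (Q + η • subBall Ht) := by
  obtain ⟨Ht, hQHt, hHtH, hk⟩ := exists_le_le_finrank_eq (span_le.mpr hQH) hspan hH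
  refine ⟨Ht, hk, hQHt, hHtH, fun η _ => gammaSub_le_of_mapsTo hHtH ?_⟩
  exact mapsTo_starProjection_add_smul_subBall (subset_span.trans hQHt) η H

/-- dimension reduction inside a subspace. -/
theorem dimension_reduction (n k : ℕ) (H : Submodule ℝ (EuclideanSpace ℝ (Fin n)))
    (hH : k ≤ Module.finrank ℝ H) (Q : Set (EuclideanSpace ℝ (Fin n)))
    (hQH : Q ⊆ (H : Set (EuclideanSpace ℝ (Fin n)))) (hQc : IsCompact Q)
    (hspan : Module.finrank ℝ (Submodule.span ℝ Q) ≤ k) :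
    ∃ Ht : Submodule ℝ (EuclideanSpace ℝ (Fin n)),
      Module.finrank ℝ Ht = k ∧ Submodule.span ℝ Q ≤ Ht ∧ Ht ≤ H ∧
      ∀ η : ℝ, 0 ≤ η →
        gammaSub H (Q + η • subBall H) ≤ gammaSub Ht (Q + η • subBall Ht) :=
  dimension_reduction_general n k H hH Q hQH hspan

end
end

section
/- There is a universal constant C > 0 such that for every integer d ≥ 1, all vectors y₁,…,y_d ∈ ℝ^d with R := max_{i ≤ d} ‖yᵢ‖₂, and every ρ ≥ 1: γ_d( ρ·conv{±y₁,…,±y_d} ) ≤ ( C·ρ·R / d )^d. -/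
/-!
The standard Gaussian density is at most `(2π)^(-d/2) ≤ 1`, so `γ_d` is dominated by Lebesgue
measure. The cross-polytope `conv{±yᵢ}` is the image of the `ℓ¹`-unit ball, of volume `2^d / d!`,
under the matrix `Y` with columns `yᵢ`; AM-GM applied to the eigenvalues of `Yᵀ Y`, whose trace is
`∑ ‖yᵢ‖² ≤ d R²`, gives `|det Y| ≤ R^d`. Scaling by `ρ` multiplies the volume by `ρ^d`, and
`d^d / d! ≤ e^d` turns `(2ρR)^d / d!` into `(2eρR / d)^d`, so `C = 2e` works.
-/

open MeasureTheory ProbabilityTheory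
open scoped ENNReal NNReal Pointwise

noncomputable section

theorem MeasureTheory.Measure.pi_mono {ι : Type*} [Fintype ι] {α : ι → Type*}
    [∀ i, MeasurableSpace (α i)] {μ ν : ∀ i, Measure (α i)} (h : ∀ i, μ i ≤ ν i) :
    Measure.pi μ ≤ Measure.pi ν := by
  have hOuter : OuterMeasure.pi (fun i => (μ i).toOuterMeasure)
      ≤ OuterMeasure.pi (fun i => (ν i).toOuterMeasure) := by
    refine OuterMeasure.le_pi.2 fun s _ => (OuterMeasure.pi_pi_le _ s).trans ?_
    exact Finset.prod_le_prod' fun i _ => Measure.le_iff'.1 (h i) (s i)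
  refine Measure.le_iff.2 fun s hs => ?_
  rw [Measure.pi_def, Measure.pi_def, toMeasure_apply _ _ hs, toMeasure_apply _ _ hs]
  exact hOuter s

theorem ProbabilityTheory.gaussianPDF_le_one {μ : ℝ} {v : ℝ≥0} (hv : 1 ≤ 2 * Real.pi * v)
    (x : ℝ) : gaussianPDF μ v x ≤ 1 := by
  refine ENNReal.ofReal_le_one.2 ?_
  rw [gaussianPDFReal_def]
  have hsqrt : (Real.sqrt (2 * Real.pi * v))⁻¹ ≤ 1 :=
    inv_le_one_of_one_le₀ (Real.one_le_sqrt.2 hv)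
  have hexp : Real.exp (-(x - μ) ^ 2 / (2 * v)) ≤ 1 :=
    Real.exp_le_one_iff.2 (div_nonpos_of_nonpos_of_nonneg (by nlinarith [sq_nonneg (x - μ)])
      (by positivity))
  exact mul_le_one₀ hsqrt (Real.exp_pos _).le hexp

theorem ProbabilityTheory.gaussianReal_le_volume {μ : ℝ} {v : ℝ≥0} (hv : 1 ≤ 2 * Real.pi * v) :
    gaussianReal μ v ≤ volume := by
  have hv0 : v ≠ 0 := by rintro rfl; norm_num at hv
  calc gaussianReal μ v = volume.withDensity (gaussianPDF μ v) := gaussianReal_of_var_ne_zero μ hv0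
    _ ≤ volume.withDensity 1 := withDensity_mono (ae_of_all _ (gaussianPDF_le_one hv))
    _ = volume := withDensity_one

theorem stdGaussian_le_volume (d : ℕ) : stdGaussian d ≤ volume := by
  have hv : (1 : ℝ) ≤ 2 * Real.pi * (1 : ℝ≥0) := by
    push_cast; nlinarith [Real.pi_gt_three]
  calc stdGaussian d
      ≤ (Measure.pi fun _ : Fin d => (volume : Measure ℝ)).map (MeasurableEquiv.toLp 2 _) :=
        Measure.map_mono (Measure.pi_mono fun _ => gaussianReal_le_volume hv)
          (MeasurableEquiv.toLp 2 (Fin d → ℝ)).measurable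
    _ = volume := (PiLp.volume_preserving_toLp (Fin d)).map_eq

theorem EuclideanSpace.volume_l1Ball (ι : Type*) [Fintype ι] [Nonempty ι] :
    volume {x : EuclideanSpace ℝ ι | ∑ i, |x i| ≤ 1}
      = ENNReal.ofReal (2 ^ Fintype.card ι / (Fintype.card ι).factorial) := by
  rw [← (EuclideanSpace.volume_preserving_symm_measurableEquiv_toLp ι).symm.measure_preimage_equiv]
  have h := volume_sum_rpow_le (ι := ι) le_rfl 1
  simpa [one_add_one_eq_two, Real.Gamma_two, Real.Gamma_nat_eq_factorial] using h

theorem Matrix.toEuclideanLin_of_columns {m n : Type*} [Fintype n] [DecidableEq n]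
    (y : n → EuclideanSpace ℝ m) (a : n → ℝ) :
    toEuclideanLin (of fun i j => y j i) (WithLp.toLp 2 a) = ∑ j, a j • y j := by
  ext i
  simp [Matrix.mulVec, dotProduct, mul_comm]

theorem absConv_univ_eq_toEuclideanLin_image {m n : Type*} [Fintype n] [DecidableEq n]
    (y : n → EuclideanSpace ℝ m) :
    absConv Finset.univ y
      = Matrix.toEuclideanLin (Matrix.of fun i j => y j i) '' {x | ∑ j, |x j| ≤ 1} := by
  ext z
  constructor
  · rintro ⟨a, ha, rfl⟩
    exact ⟨WithLp.toLp 2 a, ha, Matrix.toEuclideanLin_of_columns y a⟩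
  · rintro ⟨x, hx, rfl⟩
    exact ⟨x.ofLp, hx, by rw [← Matrix.toEuclideanLin_of_columns, WithLp.toLp_ofLp]⟩

theorem Matrix.det_toEuclideanLin {n : Type*} [Fintype n] [DecidableEq n] (A : Matrix n n ℝ) :
    LinearMap.det (toEuclideanLin A) = A.det := by
  rw [toEuclideanLin_eq_toLin_orthonormal, LinearMap.det_toLin]

theorem Real.prod_le_pow_card_of_sum_le {ι : Type*} {s : Finset ι} {z : ι → ℝ} {c : ℝ}
    (hz : ∀ i ∈ s, 0 ≤ z i) (hsum : ∑ i ∈ s, z i ≤ s.card * c) : ∏ i ∈ s, z i ≤ c ^ s.card := by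
  rcases s.eq_empty_or_nonempty with rfl | hs
  · simp
  have hcard : (0 : ℝ) < s.card := by exact_mod_cast hs.card_pos
  have hprod : 0 ≤ ∏ i ∈ s, z i := Finset.prod_nonneg hz
  have hmean := Real.geom_mean_le_arith_mean s (fun _ => 1) z (fun _ _ => zero_le_one)
    (by simpa using hcard) hz
  simp only [Real.rpow_one, Finset.sum_const, nsmul_eq_mul, mul_one, one_mul] at hmean
  have hroot : (∏ i ∈ s, z i) ^ ((s.card : ℝ)⁻¹) ≤ c :=
    hmean.trans ((div_le_iff₀' hcard).2 hsum)
  calc ∏ i ∈ s, z i = ((∏ i ∈ s, z i) ^ ((s.card : ℝ)⁻¹)) ^ s.card := by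
        rw [← Real.rpow_natCast, ← Real.rpow_mul hprod, inv_mul_cancel₀ hcard.ne', Real.rpow_one]
    _ ≤ c ^ s.card := pow_le_pow_left₀ (by positivity) hroot _

theorem Matrix.PosSemidef.det_le_pow_of_diag_le {n : Type*} [Fintype n] [DecidableEq n]
    {A : Matrix n n ℝ} (hA : A.PosSemidef) {c : ℝ} (hc : ∀ i, A i i ≤ c) :
    A.det ≤ c ^ Fintype.card n := by
  have htrace : ∑ i, hA.isHermitian.eigenvalues i ≤ Fintype.card n * c := by
    have h := hA.isHermitian.trace_eq_sum_eigenvalues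
    simp only [RCLike.ofReal_real_eq_id, id_eq] at h
    rw [← h, Matrix.trace]
    simpa using Finset.sum_le_sum fun i (_ : i ∈ Finset.univ) => hc i
  simpa [hA.isHermitian.det_eq_prod_eigenvalues] using
    Real.prod_le_pow_card_of_sum_le (fun i _ => hA.eigenvalues_nonneg i) htrace

theorem Matrix.abs_det_of_columns_le_pow_of_norm_le {n : Type*} [Fintype n] [DecidableEq n]
    (y : n → EuclideanSpace ℝ n) {R : ℝ} (hR : 0 ≤ R) (hy : ∀ j, ‖y j‖ ≤ R) :
    |(of fun i j => y j i).det| ≤ R ^ Fintype.card n := by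
  set A : Matrix n n ℝ := of fun i j => y j i
  have hGram : ∀ j, (A.conjTranspose * A) j j ≤ R ^ 2 := fun j => by
    calc (A.conjTranspose * A) j j = ‖y j‖ ^ 2 := by
          rw [EuclideanSpace.norm_sq_eq]
          simp [A, Matrix.mul_apply, sq]
      _ ≤ R ^ 2 := pow_le_pow_left₀ (norm_nonneg _) (hy j) 2
  refine abs_le_of_sq_le_sq ?_ (by positivity)
  calc A.det ^ 2 = (A.conjTranspose * A).det := by simp [Matrix.det_mul, sq]
    _ ≤ (R ^ 2) ^ Fintype.card n :=
        (posSemidef_conjTranspose_mul_self A).det_le_pow_of_diag_le hGram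
    _ = (R ^ Fintype.card n) ^ 2 := by ring

theorem volume_absConv_univ {n : Type*} [Fintype n] [DecidableEq n] [Nonempty n]
    (y : n → EuclideanSpace ℝ n) :
    volume (absConv Finset.univ y) = ENNReal.ofReal
      (|(Matrix.of fun i j => y j i).det| * (2 ^ Fintype.card n / (Fintype.card n).factorial)) := by
  rw [absConv_univ_eq_toEuclideanLin_image, Measure.addHaar_image_linearMap,
    Matrix.det_toEuclideanLin, EuclideanSpace.volume_l1Ball, ← ENNReal.ofReal_mul (abs_nonneg _)]

theorem two_pow_div_factorial_le (d : ℕ) :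
    (2 : ℝ) ^ d / d.factorial ≤ (2 * Real.exp 1 / d) ^ d := by
  rcases Nat.eq_zero_or_pos d with rfl | hd
  · simp
  have hd' : (0 : ℝ) < d := by exact_mod_cast hd
  have hpow : (d : ℝ) ^ d / d.factorial ≤ Real.exp 1 ^ d := by
    simpa [← Real.exp_nat_mul] using Real.pow_div_factorial_le_exp (d : ℝ) hd'.le d
  calc (2 : ℝ) ^ d / d.factorial = 2 ^ d * ((d : ℝ) ^ d / d.factorial) / (d : ℝ) ^ d := by
        field_simp
    _ ≤ 2 ^ d * Real.exp 1 ^ d / (d : ℝ) ^ d := by gcongr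
    _ = (2 * Real.exp 1 / d) ^ d := by rw [div_pow, mul_pow]

theorem volume_absConv_univ_le {n : Type*} [Fintype n] [DecidableEq n] [Nonempty n]
    (y : n → EuclideanSpace ℝ n) {R : ℝ} (hR : 0 ≤ R) (hy : ∀ j, ‖y j‖ ≤ R) :
    volume (absConv Finset.univ y)
      ≤ ENNReal.ofReal ((2 * Real.exp 1 * R / Fintype.card n) ^ Fintype.card n) := by
  rw [volume_absConv_univ]
  refine ENNReal.ofReal_le_ofReal ?_
  calc |(Matrix.of fun i j => y j i).det| * (2 ^ Fintype.card n / (Fintype.card n).factorial)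
      ≤ R ^ Fintype.card n * (2 * Real.exp 1 / Fintype.card n) ^ Fintype.card n := by
        gcongr
        exacts [Matrix.abs_det_of_columns_le_pow_of_norm_le y hR hy, two_pow_div_factorial_le _]
    _ = (2 * Real.exp 1 * R / Fintype.card n) ^ Fintype.card n := by
        rw [← mul_pow]; ring_nf

/-- Gaussian measure of a cross-polytope:
`γ_d(ρ·conv{±y₁,…,±y_d}) ≤ (CρR/d)^d` where `R = max ‖yᵢ‖₂`. -/
theorem crosspolytope_measure_bound :
    ∃ C : ℝ, 0 < C ∧
      ∀ (d : ℕ), 1 ≤ d →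
      ∀ (y : Fin d → EuclideanSpace ℝ (Fin d)) (R ρ : ℝ),
        (∀ i, ‖y i‖ ≤ R) → (∃ i, ‖y i‖ = R) → 1 ≤ ρ →
      stdGaussian d (ρ • absConv Finset.univ y) ≤
        ENNReal.ofReal ((C * ρ * R / d) ^ d) := by
  refine ⟨2 * Real.exp 1, by positivity, fun d hd y R ρ hy ⟨i, hi⟩ hρ => ?_⟩
  have : Nonempty (Fin d) := ⟨⟨0, hd⟩⟩
  have hR : 0 ≤ R := hi ▸ norm_nonneg _
  have hρ0 : 0 ≤ ρ := zero_le_one.trans hρ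
  calc stdGaussian d (ρ • absConv Finset.univ y)
      ≤ volume (ρ • absConv Finset.univ y) := stdGaussian_le_volume d _
    _ = ENNReal.ofReal (ρ ^ d) * volume (absConv Finset.univ y) := by
        simp [Measure.addHaar_smul_of_nonneg _ hρ0]
    _ ≤ ENNReal.ofReal (ρ ^ d) * ENNReal.ofReal ((2 * Real.exp 1 * R / d) ^ d) := by
        gcongr
        simpa using volume_absConv_univ_le y hR hy
    _ = ENNReal.ofReal ((2 * Real.exp 1 * ρ * R / d) ^ d) := by
        rw [← ENNReal.ofReal_mul (by positivity), ← mul_pow]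
        ring_nf

end
end
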